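/- arXiv:2003.03258 — 8 statements merged into one kernel-verified Lean document; each statement's English description precedes it below -/
import Mathlib

section
/- In any simple graph G, the number of subgraphs isomorphic to the path P₄ on 4 vertices equals m₃ + m - n⟨k²⟩, where m₃ = ∑_{s<t} (A³)_{st} is the sum of the strictly upper-triangular entries of the cube of the adjacency matrix. -/
/-!
`(A³)ₛₜ` counts the walks `s - x - y - t`. For `s ≠ t` such a walk is a path unless `y = s` or
`x = t`, and inclusion–exclusion counts those exceptions as `aₛₜ (kₛ + kₜ - 1)`. Summing over
`s < t`, the paths count every copy of `P₄` once (read from its smaller end), while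
`∑_{s<t} aₛₜ (kₛ + kₜ) = ∑ᵥ kᵥ²` and `∑_{s<t} aₛₜ = m`.
-/

open Finset BigOperators SimpleGraph

namespace CrossVar

variable {V : Type} [Fintype V] [DecidableEq V]

/-- Adjacency indicator `a_{xy}`. -/
def a (G : SimpleGraph V) [DecidableRel G.Adj] (x y : V) : ℚ := if G.Adj x y then 1 else 0

/-- Degree `k_v` as a rational number. -/
def deg (G : SimpleGraph V) [DecidableRel G.Adj] (v : V) : ℚ := (G.degree v : ℚ)

/-- Sum over the set `Q` of unordered pairs `{st, uv}` of vertex-disjoint (independent) edges of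
`G` of a function `f s t u v` (intended to be invariant under `s ↔ t`, `u ↔ v` and
`(s,t) ↔ (u,v)`).  Each unordered pair of independent edges corresponds to exactly `8` ordered
tuples `(s,t,u,v)`, whence the division by `8`. -/
def Qsum (G : SimpleGraph V) [DecidableRel G.Adj] (f : V → V → V → V → ℚ) : ℚ :=
  (∑ s, ∑ t, ∑ u, ∑ v,
    if G.Adj s t ∧ G.Adj u v ∧ s ≠ u ∧ s ≠ v ∧ t ≠ u ∧ t ≠ v then f s t u v else 0) / 8

/-- Sum over the unordered edges `{s,t} ∈ E` of `f s t` (intended for symmetric `f`);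
each unordered edge corresponds to two ordered adjacent pairs, whence the division by `2`. -/
def edgeSum (G : SimpleGraph V) [DecidableRel G.Adj] (f : V → V → ℚ) : ℚ :=
  (∑ s, ∑ t, if G.Adj s t then f s t else 0) / 2

/-- The number of subgraphs of `G` isomorphic to `F` (each unlabeled copy counted once). -/
noncomputable def copyCount {α : Type} (G : SimpleGraph V) (F : SimpleGraph α) : ℕ :=
  Nat.card {H : G.Subgraph // Nonempty (H.coe ≃g F)}

/-- `ξ(v)`: the sum of the degrees of the neighbours of `v`. -/
def xi (G : SimpleGraph V) [DecidableRel G.Adj] (v : V) : ℚ :=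
  ∑ u ∈ G.neighborFinset v, deg G u

/-- The paw graph: a triangle `{0,1,2}` with a pendant edge `{2,3}`. -/
def pawGraph : SimpleGraph (Fin 4) :=
  SimpleGraph.fromRel (fun x y => (x, y) ∈ [((0 : Fin 4), (1 : Fin 4)), (0, 2), (1, 2), (2, 3)])

/-- `C₃ ⊕ P₂`: the disjoint union of a triangle `{0,1,2}` and an edge `{3,4}`. -/
def triEdgeGraph : SimpleGraph (Fin 5) :=
  SimpleGraph.fromRel (fun x y => (x, y) ∈ [((0 : Fin 5), (1 : Fin 5)), (0, 2), (1, 2), (3, 4)])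

end CrossVar

lemma Finset.two_nsmul_sum_filter_fst_lt {α M : Type*} [Fintype α] [LinearOrder α]
    [AddCommMonoid M] (f : α → α → M) (hsymm : ∀ s t, f s t = f t s) (hdiag : ∀ s, f s s = 0) :
    2 • ∑ p ∈ univ.filter (fun p : α × α => p.1 < p.2), f p.1 p.2 = ∑ s, ∑ t, f s t := by
  have hsplit : ∀ s t, f s t = (if s < t then f s t else 0) + (if t < s then f t s else 0) := by
    intro s t
    rcases lt_trichotomy s t with h | rfl | h
    · simp [h, h.not_gt]
    · simp [hdiag]
    · simp [h, h.not_gt, hsymm s t]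
  calc 2 • ∑ p ∈ univ.filter (fun p : α × α => p.1 < p.2), f p.1 p.2
      = ∑ s, ∑ t, (if s < t then f s t else 0) + ∑ t, ∑ s, (if t < s then f t s else 0) := by
        rw [sum_filter, Fintype.sum_prod_type, two_nsmul]
    _ = ∑ s, ∑ t, (if s < t then f s t else 0) + ∑ s, ∑ t, (if t < s then f t s else 0) := by
        rw [sum_comm]
    _ = ∑ s, ∑ t, f s t := by
        simp only [← sum_add_distrib, ← hsplit]

namespace SimpleGraph

section
variable {V : Type*}

lemma sum_adjMatrix_apply {α : Type*} [NonAssocSemiring α] [Fintype V]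
    (G : SimpleGraph V) [DecidableRel G.Adj] (s : V) :
    ∑ x, G.adjMatrix α s x = G.degree s := by
  simp [adjMatrix_apply, ← card_neighborFinset_eq_degree, neighborFinset_eq_filter]

lemma sum_adjMatrix_apply' {α : Type*} [NonAssocSemiring α] [Fintype V]
    (G : SimpleGraph V) [DecidableRel G.Adj] (t : V) :
    ∑ x, G.adjMatrix α x t = G.degree t := by
  simp only [adjMatrix_apply, G.adj_comm _ t]
  exact G.sum_adjMatrix_apply t

lemma sum_filter_fst_lt_adjMatrix_mul {α : Type*} [Field α] [CharZero α] [Fintype V]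
    [LinearOrder V] (G : SimpleGraph V) [DecidableRel G.Adj] [Fintype G.edgeSet] :
    ∑ p ∈ univ.filter (fun p : V × V => p.1 < p.2),
        G.adjMatrix α p.1 p.2 * (G.degree p.1 + G.degree p.2 - 1)
      = ∑ v, (G.degree v : α) ^ 2 - #G.edgeFinset := by
  have hdouble := two_nsmul_sum_filter_fst_lt
    (fun s t => G.adjMatrix α s t * (G.degree s + G.degree t - 1))
    (fun s t => by simp only [adjMatrix_apply, G.adj_comm s t]; ring) (fun s => by simp)
  have hdeg : ∑ v, (G.degree v : α) = 2 * #G.edgeFinset := by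
    have : ∑ v, G.degree v = 2 * #G.edgeFinset := by convert G.sum_degrees_eq_twice_card_edges
    exact_mod_cast this
  have hfull : ∑ s, ∑ t, G.adjMatrix α s t * (G.degree s + G.degree t - 1)
      = 2 * (∑ v, (G.degree v : α) ^ 2 - #G.edgeFinset) := by
    simp only [mul_add, mul_sub, mul_one, sum_add_distrib, sum_sub_distrib]
    rw [sum_comm (f := fun s t => G.adjMatrix α s t * G.degree t)]
    simp only [← sum_mul, sum_adjMatrix_apply, sum_adjMatrix_apply', hdeg, ← sq]
    ring
  rw [hfull, two_nsmul, ← two_mul] at hdouble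
  exact mul_left_cancel₀ two_ne_zero hdouble

variable {G : SimpleGraph V} {s x y t s' x' y' t' : V}

def threeWalk (h₁ : G.Adj s x) (h₂ : G.Adj x y) (h₃ : G.Adj y t) : G.Walk s t :=
  .cons h₁ (.cons h₂ (.cons h₃ .nil))

lemma threeWalk_isPath (h₁ : G.Adj s x) (h₂ : G.Adj x y) (h₃ : G.Adj y t) (hxt : x ≠ t)
    (hys : y ≠ s) (hst : s ≠ t) : (threeWalk h₁ h₂ h₃).IsPath := by
  simp [threeWalk, Walk.cons_isPath_iff, h₁.ne, h₂.ne, h₃.ne, hxt, hys.symm, hst]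

lemma threeWalk_reverse (h₁ : G.Adj s x) (h₂ : G.Adj x y) (h₃ : G.Adj y t) :
    (threeWalk h₁ h₂ h₃).reverse = threeWalk h₃.symm h₂.symm h₁.symm := rfl

lemma toSubgraph_threeWalk_adj {a b : V} (h₁ : G.Adj s x) (h₂ : G.Adj x y) (h₃ : G.Adj y t) :
    (threeWalk h₁ h₂ h₃).toSubgraph.Adj a b ↔
      s(s, x) = s(a, b) ∨ s(x, y) = s(a, b) ∨ s(y, t) = s(a, b) := by
  simp [threeWalk]

lemma eq_of_toSubgraph_threeWalk_eq [LinearOrder V] (h₁ : G.Adj s x) (h₂ : G.Adj x y)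
    (h₃ : G.Adj y t) (hst : s < t) (h₁' : G.Adj s' x') (h₂' : G.Adj x' y') (h₃' : G.Adj y' t')
    (hxt' : x' ≠ t') (hys' : y' ≠ s') (hst' : s' < t')
    (h : (threeWalk h₁ h₂ h₃).toSubgraph = (threeWalk h₁' h₂' h₃').toSubgraph) :
    s = s' ∧ x = x' ∧ y = y' ∧ t = t' := by
  -- each edge of the path is one of the three edges of the walk, in one of two orientations
  have hadj a b := (toSubgraph_threeWalk_adj (a := a) (b := b) h₁ h₂ h₃).symm.trans
    ((congrArg (·.Adj a b) h).to_iff.trans (toSubgraph_threeWalk_adj h₁' h₂' h₃'))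
  have e₁ := (hadj s' x').2 (Or.inl rfl)
  have e₂ := (hadj x' y').2 (Or.inr (Or.inl rfl))
  have e₃ := (hadj y' t').2 (Or.inr (Or.inr rfl))
  have := lt_asymm hst
  have := h₁.ne; have := h₂.ne; have := h₃.ne; have := h₁'.ne; have := h₂'.ne; have := h₃'.ne
  simp only [Sym2.eq_iff] at e₁ e₂ e₃
  clear hadj h h₁ h₂ h₃ h₁' h₂' h₃'
  rcases e₁ with
    (⟨rfl, rfl⟩ | ⟨rfl, rfl⟩) | (⟨rfl, rfl⟩ | ⟨rfl, rfl⟩) | (⟨rfl, rfl⟩ | ⟨rfl, rfl⟩) <;>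
  rcases e₂ with (⟨h, h'⟩ | ⟨h, h'⟩) | (⟨h, h'⟩ | ⟨h, h'⟩) | (⟨h, h'⟩ | ⟨h, h'⟩) <;>
  rcases e₃ with (⟨k, k'⟩ | ⟨k, k'⟩) | (⟨k, k'⟩ | ⟨k, k'⟩) | (⟨k, k'⟩ | ⟨k, k'⟩) <;>
  subst_vars <;> simp_all

lemma Copy.toSubgraph_coeCopy_comp {W : Type*} {A : SimpleGraph W} (H : G.Subgraph)
    (e : A ≃g H.coe) : (H.coeCopy.comp e.toCopy).toSubgraph = H := by
  show Subgraph.map (H.hom.comp e.toHom) ⊤ = H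
  simp [Subgraph.map_comp]

lemma Copy.toSubgraph_eq_toSubgraph_threeWalk [DecidableEq V] (f : Copy (pathGraph 4) G)
    (h₁ : G.Adj (f 0) (f 1)) (h₂ : G.Adj (f 1) (f 2)) (h₃ : G.Adj (f 2) (f 3)) :
    f.toSubgraph = (threeWalk h₁ h₂ h₃).toSubgraph := by
  have hw := threeWalk_isPath h₁ h₂ h₃ (f.injective.ne (by decide)) (f.injective.ne (by decide))
    (f.injective.ne (by decide))
  have hf : hw.pathGraphCopy = f := Copy.ext fun i => by fin_cases i <;> rfl
  calc f.toSubgraph = hw.pathGraphCopy.toSubgraph := congrArg Copy.toSubgraph hf.symm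
    _ = (threeWalk h₁ h₂ h₃).toSubgraph := Copy.toSubgraph_coeCopy_comp _ _

end

end SimpleGraph

namespace CrossVar

variable {V : Type} [Fintype V] [DecidableEq V]

section
variable (G : SimpleGraph V) [DecidableRel G.Adj]

/-- For `s ≠ t`, the inner vertices of the paths `s - x - y - t`; for `s = t`, the closed walks
of length three through `s`. -/
def pathInteriors (s t : V) : Finset (V × V) :=
  univ.filter fun q => G.Adj s q.1 ∧ G.Adj q.1 q.2 ∧ G.Adj q.2 t ∧ q.1 ≠ t ∧ q.2 ≠ s

/-- A walk `s - x - y - t` fails to be a path exactly when it returns to `s` or visits `t` early. -/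
lemma adjMatrix_pow_three_apply {α : Type*} [CommRing α] (s t : V) :
    (G.adjMatrix α ^ 3) s t
      = #(pathInteriors G s t) + G.adjMatrix α s t * (G.degree s + G.degree t - 1) := by
  set A := G.adjMatrix α
  have hwalk : ∀ x y, A s x * A x y * A y t
      = (if (x, y) ∈ pathInteriors G s t then 1 else 0) + (if y = s then A s x * A s t else 0)
        + (if x = t then A s t * A y t else 0) - (if x = t ∧ y = s then A s t else 0) := by
    intro x y
    simp only [A, adjMatrix_apply, pathInteriors, mem_filter, mem_univ, true_and]
    by_cases hy : y = s <;> by_cases hx : x = t <;> subst_vars <;>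
      split_ifs <;> simp_all [G.adj_comm]
  have hpaths : ∑ x, ∑ y, (if (x, y) ∈ pathInteriors G s t then (1 : α) else 0)
      = #(pathInteriors G s t) := by
    rw [← Fintype.sum_prod_type', sum_boole, filter_mem_eq_inter, univ_inter]
  calc (A ^ 3) s t = ∑ x, ∑ y, A s x * A x y * A y t := by
        simp only [pow_three, Matrix.mul_apply, mul_sum, mul_assoc]
    _ = #(pathInteriors G s t) + A s t * (G.degree s + G.degree t - 1) := by
        simp only [hwalk, sum_sub_distrib, sum_add_distrib, hpaths]
        simp only [ite_and, sum_ite_irrel, sum_ite_eq', mem_univ, if_true, sum_const_zero]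
        rw [← sum_mul, ← mul_sum, sum_adjMatrix_apply, sum_adjMatrix_apply']
        ring

/-- Every copy of `P₄` is traversed by exactly one path `s - x - y - t` with `s < t`. -/
lemma copyCount_pathGraph_four [LinearOrder V] :
    copyCount G (pathGraph 4)
      = ∑ p ∈ univ.filter (fun p : V × V => p.1 < p.2), #(pathInteriors G p.1 p.2) := by
  classical
  have mem {q : (_ : V × V) × (V × V)} :
      q ∈ (univ.filter (fun p : V × V => p.1 < p.2)).sigma (fun p => pathInteriors G p.1 p.2) ↔
        q.1.1 < q.1.2 ∧ G.Adj q.1.1 q.2.1 ∧ G.Adj q.2.1 q.2.2 ∧ G.Adj q.2.2 q.1.2 ∧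
          q.2.1 ≠ q.1.2 ∧ q.2.2 ≠ q.1.1 := by
    simp [pathInteriors]
  rw [← card_sigma, copyCount, Nat.card_eq_fintype_card, Fintype.card_subtype]
  symm
  refine card_bij
    (fun q hq => (threeWalk (mem.1 hq).2.1 (mem.1 hq).2.2.1 (mem.1 hq).2.2.2.1).toSubgraph)
    ?_ ?_ ?_
  · rintro ⟨⟨s, t⟩, ⟨x, y⟩⟩ hq
    obtain ⟨hst, h₁, h₂, h₃, hxt, hys⟩ := mem.1 hq
    simpa using ⟨(threeWalk_isPath h₁ h₂ h₃ hxt hys hst.ne).pathGraphIsoToSubgraph.symm⟩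
  · rintro ⟨⟨s, t⟩, ⟨x, y⟩⟩ hq ⟨⟨s', t'⟩, ⟨x', y'⟩⟩ hq' h
    obtain ⟨hst, h₁, h₂, h₃, -, -⟩ := mem.1 hq
    obtain ⟨hst', h₁', h₂', h₃', hxt', hys'⟩ := mem.1 hq'
    obtain ⟨rfl, rfl, rfl, rfl⟩ :=
      eq_of_toSubgraph_threeWalk_eq h₁ h₂ h₃ hst h₁' h₂' h₃' hxt' hys' hst' h
    rfl
  · intro H hH
    obtain ⟨f, rfl⟩ : H ∈ Set.range Copy.toSubgraph := by
      rw [Copy.range_toSubgraph]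
      exact Nonempty.map Iso.symm (mem_filter.1 hH).2
    have h₁ : G.Adj (f 0) (f 1) := f.toHom.map_adj (by simp [pathGraph_adj])
    have h₂ : G.Adj (f 1) (f 2) := f.toHom.map_adj (by simp [pathGraph_adj])
    have h₃ : G.Adj (f 2) (f 3) := f.toHom.map_adj (by simp [pathGraph_adj])
    have hne {i j : Fin 4} (h : i ≠ j) : f i ≠ f j := f.injective.ne h
    rw [f.toSubgraph_eq_toSubgraph_threeWalk h₁ h₂ h₃]
    rcases (hne (by decide : (0 : Fin 4) ≠ 3)).lt_or_gt with hlt | hgt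
    · exact ⟨⟨(f 0, f 3), (f 1, f 2)⟩,
        mem.2 ⟨hlt, h₁, h₂, h₃, hne (by decide), hne (by decide)⟩, rfl⟩
    · refine ⟨⟨(f 3, f 0), (f 2, f 1)⟩,
        mem.2 ⟨hgt, h₃.symm, h₂.symm, h₁.symm, hne (by decide), hne (by decide)⟩, ?_⟩
      rw [← Walk.toSubgraph_reverse, threeWalk_reverse]

end

theorem stmt2 [LinearOrder V] (G : SimpleGraph V) [DecidableRel G.Adj] :
    (copyCount G (pathGraph 4) : ℚ) =
      (∑ p ∈ Finset.univ.filter (fun p : V × V => p.1 < p.2), ((G.adjMatrix ℚ) ^ 3) p.1 p.2)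
        + (G.edgeFinset.card : ℚ) - ∑ v, (deg G v) ^ 2 := by
  rw [copyCount_pathGraph_four, Nat.cast_sum]
  simp only [adjMatrix_pow_three_apply, sum_add_distrib, sum_filter_fst_lt_adjMatrix_mul, deg]
  ring

end CrossVar
end

section
/- In any simple graph G, the number of subgraphs isomorphic to the paw graph (a triangle with a pendant edge) equals ∑_{{st,uv}∈Q} (a_{su} + a_{tv})(a_{sv} + a_{tu}). -/
open Finset BigOperators SimpleGraph

/-!
A copy of the paw in `G` is the image of an injective homomorphism `pawGraph → G`, and exactly
`|Aut(paw)| = 2` such homomorphisms (swapping the two degree-two vertices) have the same image.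
Such a homomorphism is a labelled paw: a centre `s`, a pendant vertex `t` and a triangle `s u v`.
For an ordered pair of independent edges `(st, uv)` the four products in
`(a_su + a_tv)(a_sv + a_tu)` are the indicators of the labelled paws with pendant edge `st` or
`uv`; conversely every labelled paw arises from exactly four ordered pairs. Hence the sum over
ordered pairs, which is `8 Qsum`, equals `4 · 2 · #copies`.
-/

open Function

namespace SimpleGraph

variable {V W : Type*} {G : SimpleGraph V} {H : SimpleGraph W}

lemma Copy.toSubgraph_adj_apply (f : Copy H G) {a b : W} :
    f.toSubgraph.Adj (f a) (f b) ↔ H.Adj a b := by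
  simp only [Subgraph.map_adj, Subgraph.top_adj, Relation.Map]
  constructor
  · rintro ⟨c, d, hcd, hc, hd⟩
    rwa [f.injective hc, f.injective hd] at hcd
  · exact fun h => ⟨a, b, h, rfl, rfl⟩

namespace Subgraph

def copyOfIso (S : G.Subgraph) (e : H ≃g S.coe) : Copy H G :=
  ⟨S.hom.comp e.toHom, hom_injective.comp e.injective⟩

lemma toSubgraph_copyOfIso (S : G.Subgraph) (e : H ≃g S.coe) :
    (S.copyOfIso e).toSubgraph = S := by
  simp [copyOfIso, Copy.toSubgraph, map_comp]

lemma exists_copyOfIso_eq (S : G.Subgraph) {g : Copy H G} (hg : g.toSubgraph = S) :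
    ∃ e : H ≃g S.coe, S.copyOfIso e = g := by
  have hmem (a : W) : g a ∈ S.verts := hg ▸ ⟨a, trivial, rfl⟩
  have hsurj : Surjective fun a => (⟨g a, hmem a⟩ : S.verts) := by
    rintro ⟨x, hx⟩
    obtain ⟨a, -, rfl⟩ := (hg ▸ hx : x ∈ g.toSubgraph.verts)
    exact ⟨a, rfl⟩
  let e : H ≃g S.coe :=
    { toEquiv := Equiv.ofBijective _ ⟨fun a b h => g.injective (congrArg Subtype.val h), hsurj⟩
      map_rel_iff' := fun {a b} => by
        simp only [coe_adj, ← hg]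
        exact g.toSubgraph_adj_apply }
  exact ⟨e, Copy.ext fun _ => rfl⟩

end Subgraph

namespace Copy

lemma card_fiber_toSubgraph (S : G.Subgraph) (e₀ : S.coe ≃g H) :
    Nat.card {f : Copy H G // f.toSubgraph = S} = Nat.card (H ≃g H) := by
  let Φ (e : H ≃g S.coe) : {f : Copy H G // f.toSubgraph = S} :=
    ⟨S.copyOfIso e, S.toSubgraph_copyOfIso e⟩
  have hΦ : Bijective Φ := by
    refine ⟨fun e e' h => ?_, fun ⟨g, hg⟩ => ?_⟩
    · ext a
      exact congrArg (fun f : {f : Copy H G // f.toSubgraph = S} => f.1 a) h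
    · obtain ⟨e, rfl⟩ := S.exists_copyOfIso_eq hg
      exact ⟨e, rfl⟩
  calc Nat.card {f : Copy H G // f.toSubgraph = S}
      = Nat.card (H ≃g S.coe) := (Nat.card_eq_of_bijective Φ hΦ).symm
    _ = Nat.card (H ≃g H) := Nat.card_congr
      { toFun := e₀.comp, invFun := e₀.symm.comp
        left_inv := fun e => by ext; simp
        right_inv := fun σ => by ext; simp }

theorem card_eq_card_aut_mul [Finite V] :
    Nat.card (Copy H G) =
      Nat.card (H ≃g H) * Nat.card {S : G.Subgraph // Nonempty (S.coe ≃g H)} := by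
  have := Fintype.ofFinite {S : G.Subgraph // Nonempty (S.coe ≃g H)}
  let π (f : Copy H G) : {S : G.Subgraph // Nonempty (S.coe ≃g H)} :=
    ⟨f.toSubgraph, ⟨f.isoToSubgraph.symm⟩⟩
  have hfiber (S : {S : G.Subgraph // Nonempty (S.coe ≃g H)}) :
      Nat.card {f // π f = S} = Nat.card (H ≃g H) := by
    obtain ⟨S, ⟨e₀⟩⟩ := S
    simp only [π, Subtype.mk.injEq]
    exact card_fiber_toSubgraph S e₀
  have (S : {S : G.Subgraph // Nonempty (S.coe ≃g H)}) : Finite {f // π f = S} := by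
    obtain ⟨S, ⟨e₀⟩⟩ := S
    have : Finite W := .of_equiv _ e₀.toEquiv
    exact .of_injective (fun f => ⇑f.1) fun f g h => Subtype.ext (DFunLike.coe_injective h)
  rw [← Nat.card_congr (Equiv.sigmaFiberEquiv π), Nat.card_sigma,
    Finset.sum_congr rfl fun S _ => hfiber S, Finset.sum_const, Finset.card_univ, smul_eq_mul,
    ← Nat.card_eq_fintype_card, mul_comm]

end Copy

theorem Iso.toCopy_bijective [Finite W] : Bijective (Iso.toCopy : (H ≃g H) → Copy H H) := by
  refine ⟨fun e e' h => RelIso.ext fun a => DFunLike.congr_fun h a, fun f => ?_⟩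
  have hbij : Bijective f := Finite.injective_iff_bijective.1 f.injective
  have hedge : Surjective f.mapEdgeSet :=
    Finite.injective_iff_surjective.1 f.mapEdgeSet.injective
  refine ⟨{ toEquiv := Equiv.ofBijective f hbij, map_rel_iff' := fun {a b} => ?_ }, rfl⟩
  refine ⟨fun hab => ?_, f.toHom.map_adj⟩
  obtain ⟨⟨e, he⟩, hfe⟩ := hedge ⟨s(f a, f b), hab⟩
  have : e = s(a, b) := Sym2.map.injective f.injective (congrArg Subtype.val hfe)
  rwa [this] at he

end SimpleGraph

theorem Fintype.sum_sum_sum_sum_swap_pairs {V M : Type*} [Fintype V] [AddCommMonoid M]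
    (f : V → V → V → V → M) :
    ∑ s, ∑ t, ∑ u, ∑ v, f u v s t = ∑ s, ∑ t, ∑ u, ∑ v, f s t u v := by
  simp only [← Fintype.sum_prod_type']
  exact Fintype.sum_equiv ⟨fun q => (q.2.2.1, q.2.2.2, q.1, q.2.1),
    fun q => (q.2.2.1, q.2.2.2, q.1, q.2.1), fun _ => rfl, fun _ => rfl⟩ _ _ fun _ => rfl

namespace CrossVar

section

variable {V : Type*}

/-- A labelled paw: centre `s`, pendant vertex `t`, triangle `s u v`. -/
def IsPawAt (G : SimpleGraph V) (s t u v : V) : Prop :=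
  G.Adj s t ∧ G.Adj s u ∧ G.Adj s v ∧ G.Adj u v ∧ t ≠ u ∧ t ≠ v

instance (G : SimpleGraph V) [DecidableRel G.Adj] [DecidableEq V] (s t u v : V) :
    Decidable (IsPawAt G s t u v) := by
  unfold IsPawAt; infer_instance

instance : DecidableRel pawGraph.Adj := fun _ _ => decidable_of_iff' _ (fromRel_adj _ _ _)

def IsPawAt.toCopy {G : SimpleGraph V} {s t u v : V} (h : IsPawAt G s t u v) :
    Copy pawGraph G := by
  refine ⟨⟨![u, v, s, t], fun {i j} hij => ?_⟩, fun i j hij => ?_⟩ <;>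
    obtain ⟨hst, hsu, hsv, huv, htu, htv⟩ := h
  · fin_cases i <;> fin_cases j <;>
      simp only [Fin.zero_eta, Fin.mk_one, Fin.reduceFinMk, Matrix.cons_val] at hij ⊢
    all_goals first | exact absurd hij (by decide) | assumption | exact Adj.symm (by assumption)
  · fin_cases i <;> fin_cases j <;> simp at hij ⊢ <;> simp_all

def copyPawEquiv (G : SimpleGraph V) :
    Copy pawGraph G ≃ {q : V × V × V × V // IsPawAt G q.1 q.2.1 q.2.2.1 q.2.2.2} where
  toFun f := ⟨(f 2, f 3, f 0, f 1), f.toHom.map_adj (by decide), f.toHom.map_adj (by decide),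
    f.toHom.map_adj (by decide), f.toHom.map_adj (by decide),
    f.injective.ne (by decide), f.injective.ne (by decide)⟩
  invFun q := q.2.toCopy
  left_inv f := Copy.ext fun i => by fin_cases i <;> rfl
  right_inv _ := rfl

lemma card_copy_pawGraph (G : SimpleGraph V) [Fintype V] [DecidableEq V] [DecidableRel G.Adj] :
    Nat.card (Copy pawGraph G) = ∑ s, ∑ t, ∑ u, ∑ v, if IsPawAt G s t u v then 1 else 0 := by
  rw [Nat.card_congr (copyPawEquiv G), Nat.card_eq_fintype_card, Fintype.card_subtype,
    Finset.card_filter]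
  simp only [Fintype.sum_prod_type]

lemma card_aut_pawGraph : Nat.card (pawGraph ≃g pawGraph) = 2 := by
  rw [Nat.card_eq_of_bijective _ Iso.toCopy_bijective, card_copy_pawGraph]
  decide

end

section

variable {V : Type} (G : SimpleGraph V) [DecidableRel G.Adj]

lemma copyCount_pawGraph_mul_two [Fintype V] [DecidableEq V] :
    (copyCount G pawGraph : ℚ) * 2 = ∑ s, ∑ t, ∑ u, ∑ v, if IsPawAt G s t u v then 1 else 0 := by
  have := Copy.card_eq_card_aut_mul (G := G) (H := pawGraph)
  rw [card_copy_pawGraph, card_aut_pawGraph] at this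
  rw [copyCount]
  exact_mod_cast (this.trans (mul_comm _ _)).symm

lemma a_comm (x y : V) : a G x y = a G y x := by
  simp only [a, G.adj_comm]

variable {G} in
lemma ite_isPawAt_eq_mul [DecidableEq V] {s t u v : V} (hst : G.Adj s t) (huv : G.Adj u v)
    (htu : t ≠ u) (htv : t ≠ v) :
    (if IsPawAt G s t u v then 1 else 0 : ℚ) = a G s u * a G s v := by
  by_cases hsu : G.Adj s u <;> by_cases hsv : G.Adj s v <;> simp [IsPawAt, a, *]

lemma cross_term_eq_sum_isPawAt [DecidableEq V] (s t u v : V) :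
    (if G.Adj s t ∧ G.Adj u v ∧ s ≠ u ∧ s ≠ v ∧ t ≠ u ∧ t ≠ v then
        (a G s u + a G t v) * (a G s v + a G t u) else 0) =
      (if IsPawAt G s t u v then 1 else 0 : ℚ) + (if IsPawAt G t s u v then 1 else 0) +
        (if IsPawAt G u v s t then 1 else 0) + (if IsPawAt G v u s t then 1 else 0) := by
  by_cases h : G.Adj s t ∧ G.Adj u v ∧ s ≠ u ∧ s ≠ v ∧ t ≠ u ∧ t ≠ v
  · obtain ⟨hst, huv, hsu, hsv, htu, htv⟩ := h
    rw [if_pos ⟨hst, huv, hsu, hsv, htu, htv⟩, ite_isPawAt_eq_mul hst huv htu htv,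
      ite_isPawAt_eq_mul hst.symm huv hsu hsv, ite_isPawAt_eq_mul huv hst hsv.symm htv.symm,
      ite_isPawAt_eq_mul huv.symm hst hsu.symm htu.symm, a_comm G u, a_comm G u,
      a_comm G v, a_comm G v]
    ring
  · have hnot : ¬IsPawAt G s t u v ∧ ¬IsPawAt G t s u v ∧ ¬IsPawAt G u v s t ∧
        ¬IsPawAt G v u s t := by
      refine ⟨?_, ?_, ?_, ?_⟩ <;> rintro ⟨h₁, h₂, h₃, h₄, h₅, h₆⟩ <;>
        refine h ⟨?_, ?_, ?_, ?_, ?_, ?_⟩ <;>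
        first
          | assumption
          | exact Adj.symm (by assumption)
          | exact Adj.ne (by assumption)
          | exact (Adj.ne (by assumption)).symm
          | exact Ne.symm (by assumption)
    simp [h, hnot]

lemma sum_cross_term_eq_four_mul [Fintype V] [DecidableEq V] :
    (∑ s, ∑ t, ∑ u, ∑ v, if G.Adj s t ∧ G.Adj u v ∧ s ≠ u ∧ s ≠ v ∧ t ≠ u ∧ t ≠ v then
        (a G s u + a G t v) * (a G s v + a G t u) else 0) =
      4 * ∑ s, ∑ t, ∑ u, ∑ v, if IsPawAt G s t u v then 1 else 0 := by
  simp only [cross_term_eq_sum_isPawAt, Finset.sum_add_distrib]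
  rw [Finset.sum_comm (f := fun s t => ∑ u, ∑ v, if IsPawAt G t s u v then (1 : ℚ) else 0),
    Fintype.sum_sum_sum_sum_swap_pairs fun s t u v => if IsPawAt G s t u v then (1 : ℚ) else 0,
    Fintype.sum_sum_sum_sum_swap_pairs fun s t u v => if IsPawAt G t s u v then (1 : ℚ) else 0,
    Finset.sum_comm (f := fun s t => ∑ u, ∑ v, if IsPawAt G t s u v then (1 : ℚ) else 0)]
  ring

end

variable {V : Type} [Fintype V] [DecidableEq V]

theorem stmt3 (G : SimpleGraph V) [DecidableRel G.Adj] :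
    (copyCount G pawGraph : ℚ) =
      Qsum G (fun s t u v => (a G s u + a G t v) * (a G s v + a G t u)) := by
  rw [Qsum, sum_cross_term_eq_four_mul, ← copyCount_pawGraph_mul_two]
  ring

end CrossVar
end

section
/- In any simple graph G, the number of 4-cycles satisfies n_G(C₄) = (1/2) ∑_{{st,uv}∈Q} (a_{sv}a_{tu} + a_{su}a_{tv}), where Q is the set of unordered pairs of vertex-disjoint edges. -/
open Finset BigOperators SimpleGraph

/-! Every subgraph of `G` isomorphic to `C₄` is the image of exactly `|Aut C₄| = 8` injective
homomorphisms `C₄ → G`, and these are the tuples `(s, t, u, v)` with `s ~ t ~ u ~ v ~ s`,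
`s ≠ u`, `t ≠ v`. An ordered pair of disjoint edges `(s, t), (u, v)` closes up into such a tuple
in at most two ways, `(s, t, u, v)` when `a_{sv} a_{tu} = 1` and `(s, t, v, u)` when
`a_{su} a_{tv} = 1`, and each tuple arises from exactly two ordered pairs of edges. Hence the
ordered sum in `Qsum` is `2 · 8 · n_G(C₄)`. -/

namespace SimpleGraph

namespace Copy

variable {V W : Type*} {G : SimpleGraph V} {H : SimpleGraph W}

theorem toSubgraph_adj_apply_s5 (f : Copy H G) {a b : W} :
    f.toSubgraph.Adj (f a) (f b) ↔ H.Adj a b := by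
  have hf : Function.Injective f := f.injective
  simp [Relation.Map, hf.eq_iff]

theorem toSubgraph_comp_iso (f : Copy H G) (σ : H ≃g H) :
    (f.comp σ.toCopy).toSubgraph = f.toSubgraph := by
  ext x y
  · simp only [Subgraph.map_verts, Subgraph.verts_top, Set.image_univ, coe_toHom, coe_comp]
    exact Iff.of_eq (congrArg (x ∈ ·) (σ.surjective.range_comp f))
  · simp only [Subgraph.map_adj, Relation.Map, Subgraph.top_adj, coe_toHom, comp_apply]
    constructor
    · rintro ⟨a, b, hab, rfl, rfl⟩
      exact ⟨σ a, σ b, σ.map_adj_iff.2 hab, rfl, rfl⟩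
    · rintro ⟨a, b, hab, rfl, rfl⟩
      exact ⟨σ.symm a, σ.symm b, σ.symm.map_adj_iff.2 hab, by simp, by simp⟩

theorem exists_iso_comp_eq [Finite W] {f f' : Copy H G} (h : f'.toSubgraph = f.toSubgraph) :
    ∃ σ : H ≃g H, f' = f.comp σ.toCopy := by
  have hrange : ∀ w, ∃ w', f w' = f' w := fun w => by
    have : f' w ∈ f'.toSubgraph.verts := by simp
    simpa [h] using this
  choose σ hσ using hrange
  have hinj : Function.Injective σ := fun a b hab =>
    f'.injective (by simp only [coe_toHom, ← hσ, hab])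
  have hadj : ∀ a b, H.Adj (σ a) (σ b) ↔ H.Adj a b := fun a b => by
    rw [← f.toSubgraph_adj_apply_s5, hσ, hσ, ← h, f'.toSubgraph_adj_apply_s5]
  refine ⟨⟨Equiv.ofBijective σ hinj.bijective_of_finite, hadj _ _⟩, ?_⟩
  ext w
  simp [comp_apply, hσ]

noncomputable def isoEquivToSubgraphFiber [Finite W] (f : Copy H G) :
    (H ≃g H) ≃ {f' : Copy H G // f'.toSubgraph = f.toSubgraph} :=
  Equiv.ofBijective (fun σ => ⟨f.comp σ.toCopy, f.toSubgraph_comp_iso σ⟩) <| by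
    refine ⟨fun σ τ hστ => ?_, fun ⟨f', hf'⟩ => ?_⟩
    · ext w
      exact f.injective (congrArg (· w) (congrArg Subtype.val hστ) :)
    · obtain ⟨σ, rfl⟩ := exists_iso_comp_eq hf'
      exact ⟨σ, rfl⟩

end Copy

theorem labelledCopyCount_eq_card_iso_mul_copyCount {V W : Type*} [Fintype V] [Fintype W]
    (G : SimpleGraph V) (H : SimpleGraph W) :
    G.labelledCopyCount H = Nat.card (H ≃g H) * G.copyCount H := by
  classical
  let image : Copy H G → {S : G.Subgraph // Nonempty (H ≃g S.coe)} :=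
    fun f => ⟨f.toSubgraph, ⟨f.isoToSubgraph⟩⟩
  have hfiber (S : {S : G.Subgraph // Nonempty (H ≃g S.coe)}) :
      Nat.card {f // image f = S} = Nat.card (H ≃g H) := by
    obtain ⟨f, hf⟩ : S.1 ∈ Set.range Copy.toSubgraph := by
      rw [Copy.range_toSubgraph]; exact S.2
    obtain rfl : image f = S := Subtype.ext hf
    exact Nat.card_congr <|
      (Equiv.subtypeEquivRight fun _ => Subtype.ext_iff).trans f.isoEquivToSubgraphFiber.symm
  rw [labelledCopyCount, copyCount, ← Nat.card_eq_fintype_card,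
    ← Nat.card_congr (Equiv.sigmaFiberEquiv image), Nat.card_sigma]
  simp only [hfiber, sum_const, card_univ, smul_eq_mul, mul_comm, Fintype.card_subtype]

def Iso.equivPermSubtype {W : Type*} (H : SimpleGraph W) :
    (H ≃g H) ≃ {σ : Equiv.Perm W // ∀ a b, H.Adj (σ a) (σ b) ↔ H.Adj a b} where
  toFun e := ⟨e.toEquiv, fun _ _ => e.map_rel_iff⟩
  invFun σ := ⟨σ.1, σ.2 _ _⟩

theorem card_iso_cycleGraph_four : Nat.card (cycleGraph 4 ≃g cycleGraph 4) = 8 := by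
  rw [Nat.card_congr (Iso.equivPermSubtype _), Nat.card_eq_fintype_card]
  decide

section IsFourCycle

variable {V : Type*} (G : SimpleGraph V)

def IsFourCycle (s t u v : V) : Prop :=
  G.Adj s t ∧ G.Adj t u ∧ G.Adj u v ∧ G.Adj v s ∧ s ≠ u ∧ t ≠ v

instance [DecidableEq V] [DecidableRel G.Adj] (s t u v : V) :
    Decidable (G.IsFourCycle s t u v) := by
  unfold IsFourCycle; infer_instance

variable {G}

theorem IsFourCycle.adj_vecCons {s t u v : V} (h : G.IsFourCycle s t u v) {i j : Fin 4}
    (hij : (cycleGraph 4).Adj i j) : G.Adj (![s, t, u, v] i) (![s, t, u, v] j) := by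
  obtain ⟨hst, htu, huv, hvs, -, -⟩ := h
  fin_cases i <;> fin_cases j <;>
    first
    | exact absurd hij (by decide)
    | simp [*, hst.symm, htu.symm, huv.symm, hvs.symm]

theorem IsFourCycle.injective_vecCons {s t u v : V} (h : G.IsFourCycle s t u v) :
    Function.Injective ![s, t, u, v] := by
  obtain ⟨hst, htu, huv, hvs, hsu, htv⟩ := h
  intro i j hij
  fin_cases i <;> fin_cases j <;> simp_all [hst.ne, htu.ne, huv.ne, hvs.ne, eq_comm]

variable (G)

def copyCycleGraphFourEquiv :
    Copy (cycleGraph 4) G ≃ {p : V × V × V × V // G.IsFourCycle p.1 p.2.1 p.2.2.1 p.2.2.2} where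
  toFun f := ⟨(f 0, f 1, f 2, f 3),
    f.toHom.map_adj (by decide), f.toHom.map_adj (by decide), f.toHom.map_adj (by decide),
    f.toHom.map_adj (by decide), f.injective.ne (by decide), f.injective.ne (by decide)⟩
  invFun p := ⟨⟨_, p.2.adj_vecCons⟩, p.2.injective_vecCons⟩
  left_inv f := by
    ext i; fin_cases i <;> rfl
  right_inv p := rfl

theorem labelledCopyCount_cycleGraph_four [Fintype V] [DecidableEq V] [DecidableRel G.Adj] :
    G.labelledCopyCount (cycleGraph 4) =
      #{p : V × V × V × V | G.IsFourCycle p.1 p.2.1 p.2.2.1 p.2.2.2} := by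
  rw [labelledCopyCount, Fintype.card_eq_nat_card, Nat.card_congr G.copyCycleGraphFourEquiv,
    Nat.card_eq_fintype_card, Fintype.card_subtype]

end IsFourCycle

end SimpleGraph

namespace CrossVar

theorem copyCount_eq_simpleGraph_copyCount {V α : Type} [Fintype V] (G : SimpleGraph V)
    (F : SimpleGraph α) : copyCount G F = G.copyCount F := by
  classical
  rw [SimpleGraph.copyCount, ← Nat.card_eq_finsetCard, copyCount]
  refine Nat.card_congr <| Equiv.subtypeEquivRight fun S => ?_
  simp only [mem_filter, mem_univ, true_and]
  exact ⟨fun ⟨e⟩ => ⟨e.symm⟩, fun ⟨e⟩ => ⟨e.symm⟩⟩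

theorem ite_crossTerms_eq {V : Type} [DecidableEq V] (G : SimpleGraph V) [DecidableRel G.Adj]
    (s t u v : V) :
    (if G.Adj s t ∧ G.Adj u v ∧ s ≠ u ∧ s ≠ v ∧ t ≠ u ∧ t ≠ v then
        a G s v * a G t u + a G s u * a G t v else 0) =
      (if G.IsFourCycle s t u v then 1 else 0) + (if G.IsFourCycle s t v u then 1 else 0) := by
  unfold a IsFourCycle
  split_ifs <;> grind [G.adj_comm, Adj.ne]

theorem Qsum_crossTerms {V : Type} [Fintype V] [DecidableEq V] (G : SimpleGraph V)
    [DecidableRel G.Adj] :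
    Qsum G (fun s t u v => a G s v * a G t u + a G s u * a G t v) =
      #{p : V × V × V × V | G.IsFourCycle p.1 p.2.1 p.2.2.1 p.2.2.2} / 4 := by
  have hcount : ∑ s, ∑ t, ∑ u, ∑ v, (if G.IsFourCycle s t u v then (1 : ℚ) else 0) =
      #{p : V × V × V × V | G.IsFourCycle p.1 p.2.1 p.2.2.1 p.2.2.2} := by
    rw [natCast_card_filter]
    simp only [Fintype.sum_prod_type]
  have hswap : ∑ s, ∑ t, ∑ u, ∑ v, (if G.IsFourCycle s t v u then (1 : ℚ) else 0) =
      ∑ s, ∑ t, ∑ u, ∑ v, (if G.IsFourCycle s t u v then (1 : ℚ) else 0) :=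
    sum_congr rfl fun s _ => sum_congr rfl fun t _ => sum_comm
  rw [Qsum]
  simp only [ite_crossTerms_eq, sum_add_distrib]
  rw [hswap, hcount]
  ring

variable {V : Type} [Fintype V] [DecidableEq V]

theorem stmt5 (G : SimpleGraph V) [DecidableRel G.Adj] :
    (copyCount G (cycleGraph 4) : ℚ) =
      (1 / 2) * Qsum G (fun s t u v => a G s v * a G t u + a G s u * a G t v) := by
  have hlabelled := labelledCopyCount_eq_card_iso_mul_copyCount G (cycleGraph 4)
  rw [card_iso_cycleGraph_four, labelledCopyCount_cycleGraph_four] at hlabelled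
  rw [Qsum_crossTerms, copyCount_eq_simpleGraph_copyCount, hlabelled]
  push_cast
  ring

end CrossVar
end

section
/- In any simple graph G, K := ∑_{{st,uv}∈Q} (k_s + k_t + k_u + k_v) = n[(m+1)⟨k²⟩ - ⟨k³⟩] - 2ψ, where ψ = ∑_{st∈E} k_s k_t. -/
open Finset BigOperators SimpleGraph

namespace CrossVar

variable {V : Type} [Fintype V] [DecidableEq V]

variable (G : SimpleGraph V) [DecidableRel G.Adj]

lemma a_symm (s t : V) : a G s t = a G t s := by simp [a, SimpleGraph.adj_comm]

lemma a_sq (s t : V) : a G s t * a G s t = a G s t := by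
  unfold a; split <;> norm_num

lemma sum_a (s : V) : ∑ t, a G s t = deg G s := by
  simp [a, deg, SimpleGraph.degree, SimpleGraph.neighborFinset_eq_filter, Finset.sum_boole]

def b (v : V) : ℚ := ∑ u, a G v u * deg G u

lemma sum_a_left (t : V) : ∑ s, a G s t = deg G t := by
  simp_rw [a_symm]; exact sum_a G t

lemma sum_a_left_mul (t : V) : ∑ s, a G s t * deg G s = b G t := by
  unfold b; simp_rw [a_symm G t]

lemma sum_b : ∑ u, b G u = ∑ v, deg G v ^ 2 := by
  unfold b
  rw [Finset.sum_comm]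
  simp_rw [← Finset.sum_mul, sum_a_left, sq]

set_option maxHeartbeats 1000000 in
lemma point (s t u v : V) :
    (if G.Adj s t ∧ G.Adj u v ∧ s ≠ u ∧ s ≠ v ∧ t ≠ u ∧ t ≠ v then
        deg G s + deg G t + deg G u + deg G v else 0)
    = a G s t * a G u v * (deg G s + deg G t + deg G u + deg G v)
      - (if u = s then a G s t * a G s v * (2 * deg G s + deg G t + deg G v) else 0)
      - (if v = s then a G s t * a G u s * (2 * deg G s + deg G t + deg G u) else 0)
      - (if u = t then a G s t * a G t v * (deg G s + 2 * deg G t + deg G v) else 0)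
      - (if v = t then a G s t * a G u t * (deg G s + 2 * deg G t + deg G u) else 0)
      + (if u = s then (if v = t then a G s t * a G s t * (2 * deg G s + 2 * deg G t) else 0) else 0)
      + (if u = t then (if v = s then a G s t * a G t s * (2 * deg G s + 2 * deg G t) else 0) else 0) := by
  unfold a
  by_cases h1 : G.Adj s t
  · by_cases h2 : G.Adj u v
    · have hst := h1.ne
      have huv := h2.ne
      by_cases e1 : s = u <;> by_cases e2 : s = v <;> by_cases e3 : t = u <;> by_cases e4 : t = v <;>
        subst_vars
      all_goals try simp_all
      all_goals try ring
      all_goals try (split_ifs <;> (try simp_all) <;> (try ring))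
    · simp_all
      try (split_ifs <;> (try simp_all [G.adj_comm]) <;> (try ring))
  · simp_all
    try (split_ifs <;> (try simp_all [G.adj_comm]) <;> (try ring))

lemma hrow (u : V) (c : ℚ) : ∑ v, a G u v * (c + deg G v) = deg G u * c + b G u := by
  simp_rw [mul_add]
  rw [Finset.sum_add_distrib, ← Finset.sum_mul, sum_a]
  rfl

lemma D1 : ∑ s, ∑ t, a G s t = ∑ x, deg G x := by simp_rw [sum_a]

lemma D2 : ∑ s, ∑ t, a G s t * deg G s = ∑ x, deg G x ^ 2 := by
  simp_rw [← Finset.sum_mul, sum_a, sq]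

lemma D2' : ∑ s, ∑ t, a G s t * deg G t = ∑ x, deg G x ^ 2 := by
  rw [← sum_b]; rfl

lemma D3 : ∑ s, ∑ t, a G s t * deg G s ^ 2 = ∑ x, deg G x ^ 3 := by
  simp_rw [← Finset.sum_mul, sum_a]
  exact Finset.sum_congr rfl fun s _ => by ring

lemma D3' : ∑ s, ∑ t, a G s t * deg G t ^ 2 = ∑ x, deg G x ^ 3 := by
  rw [Finset.sum_comm]
  simp_rw [← Finset.sum_mul, sum_a_left]
  exact Finset.sum_congr rfl fun s _ => by ring

lemma D5 : ∑ s, ∑ t, a G s t * b G s = ∑ s, ∑ t, a G s t * (deg G s * deg G t) := by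
  simp_rw [← Finset.sum_mul, sum_a, b, Finset.mul_sum]
  refine Finset.sum_congr rfl fun s _ => Finset.sum_congr rfl fun t _ => by ring

lemma D5' : ∑ s, ∑ t, a G s t * b G t = ∑ s, ∑ t, a G s t * (deg G s * deg G t) := by
  rw [Finset.sum_comm]
  simp_rw [← Finset.sum_mul, sum_a_left, b, Finset.mul_sum]
  rw [Finset.sum_comm]
  refine Finset.sum_congr rfl fun s _ => Finset.sum_congr rfl fun t _ => by
    rw [a_symm]; ring

lemma L1 : ∑ s, ∑ t, ∑ u, ∑ v, a G s t * a G u v * (deg G s + deg G t + deg G u + deg G v)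
    = 4 * (∑ x, deg G x) * (∑ x, deg G x ^ 2) := by
  have h1 : ∀ s t u : V, ∑ v, a G s t * a G u v * (deg G s + deg G t + deg G u + deg G v)
      = a G s t * (deg G u * (deg G s + deg G t + deg G u) + b G u) := by
    intro s t u
    simp_rw [mul_assoc]
    rw [← Finset.mul_sum, hrow]
  simp_rw [h1]
  have h2 : ∀ s t : V, ∑ u, a G s t * (deg G u * (deg G s + deg G t + deg G u) + b G u)
      = (∑ x, deg G x) * (a G s t * deg G s) + (∑ x, deg G x) * (a G s t * deg G t)
        + (2 * ∑ x, deg G x ^ 2) * a G s t := by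
    intro s t
    rw [← Finset.mul_sum]
    have : ∑ u, (deg G u * (deg G s + deg G t + deg G u) + b G u)
        = (∑ x, deg G x) * (deg G s + deg G t) + 2 * ∑ x, deg G x ^ 2 := by
      rw [Finset.sum_add_distrib, sum_b]
      have : ∀ u : V, deg G u * (deg G s + deg G t + deg G u)
          = deg G u * (deg G s + deg G t) + deg G u ^ 2 := fun u => by ring
      simp_rw [this]
      rw [Finset.sum_add_distrib, ← Finset.sum_mul]
      ring
    rw [this]; ring
  simp_rw [h2]
  simp_rw [Finset.sum_add_distrib, ← Finset.mul_sum]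
  rw [D2, D2', D1]
  ring

lemma L2 : ∑ s, ∑ t, ∑ u, ∑ v,
      (if u = s then a G s t * a G s v * (2 * deg G s + deg G t + deg G v) else 0)
    = 2 * (∑ x, deg G x ^ 3) + 2 * (∑ s, ∑ t, a G s t * (deg G s * deg G t)) := by
  have h0 : ∀ s t : V, ∑ u, ∑ v,
      (if u = s then a G s t * a G s v * (2 * deg G s + deg G t + deg G v) else 0)
      = ∑ v, a G s t * a G s v * (2 * deg G s + deg G t + deg G v) := by
    intro s t
    simp [Finset.sum_ite_irrel, Finset.sum_ite_eq', Finset.mem_univ]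
  simp_rw [h0]
  have h1 : ∀ s t : V, ∑ v, a G s t * a G s v * (2 * deg G s + deg G t + deg G v)
      = a G s t * (deg G s * (2 * deg G s + deg G t) + b G s) := by
    intro s t
    simp_rw [mul_assoc]
    rw [← Finset.mul_sum, hrow]
  simp_rw [h1]
  have h2 : ∀ s t : V, a G s t * (deg G s * (2 * deg G s + deg G t) + b G s)
      = 2 * (a G s t * deg G s ^ 2) + a G s t * (deg G s * deg G t) + a G s t * b G s :=
    fun s t => by ring
  simp_rw [h2, Finset.sum_add_distrib, ← Finset.mul_sum]
  rw [D3, D5]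
  ring

lemma L3 : ∑ s, ∑ t, ∑ u, ∑ v,
      (if v = s then a G s t * a G u s * (2 * deg G s + deg G t + deg G u) else 0)
    = 2 * (∑ x, deg G x ^ 3) + 2 * (∑ s, ∑ t, a G s t * (deg G s * deg G t)) := by
  have h0 : ∀ s t : V, ∑ u, ∑ v,
      (if v = s then a G s t * a G u s * (2 * deg G s + deg G t + deg G u) else 0)
      = ∑ u, a G s t * a G s u * (2 * deg G s + deg G t + deg G u) := by
    intro s t
    simp_rw [Finset.sum_ite_eq' Finset.univ s, if_pos (Finset.mem_univ s)]
    exact Finset.sum_congr rfl fun u _ => by rw [a_symm G u s]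
  simp_rw [h0]
  have h1 : ∀ s t : V, ∑ u, a G s t * a G s u * (2 * deg G s + deg G t + deg G u)
      = a G s t * (deg G s * (2 * deg G s + deg G t) + b G s) := by
    intro s t
    simp_rw [mul_assoc]
    rw [← Finset.mul_sum, hrow]
  simp_rw [h1]
  have h2 : ∀ s t : V, a G s t * (deg G s * (2 * deg G s + deg G t) + b G s)
      = 2 * (a G s t * deg G s ^ 2) + a G s t * (deg G s * deg G t) + a G s t * b G s :=
    fun s t => by ring
  simp_rw [h2, Finset.sum_add_distrib, ← Finset.mul_sum]
  rw [D3, D5]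
  ring

lemma L4 : ∑ s, ∑ t, ∑ u, ∑ v,
      (if u = t then a G s t * a G t v * (deg G s + 2 * deg G t + deg G v) else 0)
    = 2 * (∑ x, deg G x ^ 3) + 2 * (∑ s, ∑ t, a G s t * (deg G s * deg G t)) := by
  have h0 : ∀ s t : V, ∑ u, ∑ v,
      (if u = t then a G s t * a G t v * (deg G s + 2 * deg G t + deg G v) else 0)
      = ∑ v, a G s t * a G t v * (deg G s + 2 * deg G t + deg G v) := by
    intro s t
    simp [Finset.sum_ite_irrel, Finset.sum_ite_eq', Finset.mem_univ]
  simp_rw [h0]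
  have h1 : ∀ s t : V, ∑ v, a G s t * a G t v * (deg G s + 2 * deg G t + deg G v)
      = a G s t * (deg G t * (deg G s + 2 * deg G t) + b G t) := by
    intro s t
    simp_rw [mul_assoc]
    rw [← Finset.mul_sum, hrow]
  simp_rw [h1]
  have h2 : ∀ s t : V, a G s t * (deg G t * (deg G s + 2 * deg G t) + b G t)
      = 2 * (a G s t * deg G t ^ 2) + a G s t * (deg G s * deg G t) + a G s t * b G t :=
    fun s t => by ring
  simp_rw [h2, Finset.sum_add_distrib, ← Finset.mul_sum]
  rw [D3', D5']
  ring

lemma L5 : ∑ s, ∑ t, ∑ u, ∑ v,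
      (if v = t then a G s t * a G u t * (deg G s + 2 * deg G t + deg G u) else 0)
    = 2 * (∑ x, deg G x ^ 3) + 2 * (∑ s, ∑ t, a G s t * (deg G s * deg G t)) := by
  have h0 : ∀ s t : V, ∑ u, ∑ v,
      (if v = t then a G s t * a G u t * (deg G s + 2 * deg G t + deg G u) else 0)
      = ∑ u, a G s t * a G t u * (deg G s + 2 * deg G t + deg G u) := by
    intro s t
    simp_rw [Finset.sum_ite_eq' Finset.univ t, if_pos (Finset.mem_univ t)]
    exact Finset.sum_congr rfl fun u _ => by rw [a_symm G u t]
  simp_rw [h0]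
  have h1 : ∀ s t : V, ∑ u, a G s t * a G t u * (deg G s + 2 * deg G t + deg G u)
      = a G s t * (deg G t * (deg G s + 2 * deg G t) + b G t) := by
    intro s t
    simp_rw [mul_assoc]
    rw [← Finset.mul_sum, hrow]
  simp_rw [h1]
  have h2 : ∀ s t : V, a G s t * (deg G t * (deg G s + 2 * deg G t) + b G t)
      = 2 * (a G s t * deg G t ^ 2) + a G s t * (deg G s * deg G t) + a G s t * b G t :=
    fun s t => by ring
  simp_rw [h2, Finset.sum_add_distrib, ← Finset.mul_sum]
  rw [D3', D5']
  ring

lemma L6 : ∑ s, ∑ t, ∑ u, ∑ v,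
      (if u = s then (if v = t then a G s t * a G s t * (2 * deg G s + 2 * deg G t) else 0) else 0)
    = 4 * (∑ x, deg G x ^ 2) := by
  have h0 : ∀ s t : V, ∑ u, ∑ v,
      (if u = s then (if v = t then a G s t * a G s t * (2 * deg G s + 2 * deg G t) else 0) else 0)
      = a G s t * (2 * deg G s + 2 * deg G t) := by
    intro s t
    simp [Finset.sum_ite_irrel, Finset.sum_ite_eq', Finset.mem_univ, a_sq]
  simp_rw [h0]
  have h2 : ∀ s t : V, a G s t * (2 * deg G s + 2 * deg G t)
      = 2 * (a G s t * deg G s) + 2 * (a G s t * deg G t) := fun s t => by ring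
  simp_rw [h2, Finset.sum_add_distrib, ← Finset.mul_sum]
  rw [D2, D2']
  ring

lemma L7 : ∑ s, ∑ t, ∑ u, ∑ v,
      (if u = t then (if v = s then a G s t * a G t s * (2 * deg G s + 2 * deg G t) else 0) else 0)
    = 4 * (∑ x, deg G x ^ 2) := by
  have h0 : ∀ s t : V, ∑ u, ∑ v,
      (if u = t then (if v = s then a G s t * a G t s * (2 * deg G s + 2 * deg G t) else 0) else 0)
      = a G s t * (2 * deg G s + 2 * deg G t) := by
    intro s t
    rw [← a_symm]
    simp [Finset.sum_ite_irrel, Finset.sum_ite_eq', Finset.mem_univ, a_sq]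
  simp_rw [h0]
  have h2 : ∀ s t : V, a G s t * (2 * deg G s + 2 * deg G t)
      = 2 * (a G s t * deg G s) + 2 * (a G s t * deg G t) := fun s t => by ring
  simp_rw [h2, Finset.sum_add_distrib, ← Finset.mul_sum]
  rw [D2, D2']
  ring

set_option maxHeartbeats 1000000 in
lemma quad : (∑ s, ∑ t, ∑ u, ∑ v,
    if G.Adj s t ∧ G.Adj u v ∧ s ≠ u ∧ s ≠ v ∧ t ≠ u ∧ t ≠ v then
      deg G s + deg G t + deg G u + deg G v else 0)
    = 4 * (∑ x, deg G x) * (∑ x, deg G x ^ 2) + 8 * (∑ x, deg G x ^ 2)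
      - 8 * (∑ x, deg G x ^ 3) - 8 * (∑ s, ∑ t, a G s t * (deg G s * deg G t)) := by
  simp_rw [point]
  simp only [Finset.sum_sub_distrib, Finset.sum_add_distrib]
  rw [L1, L2, L3, L4, L5, L6, L7]
  ring

lemma sum_deg : ∑ x, deg G x = 2 * (G.edgeFinset.card : ℚ) := by
  unfold deg
  rw [← Nat.cast_sum, SimpleGraph.sum_degrees_eq_twice_card_edges]
  push_cast; ring

lemma edgeSum_eq : ∑ s, ∑ t, a G s t * (deg G s * deg G t)
    = 2 * edgeSum G (fun s t => deg G s * deg G t) := by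
  unfold edgeSum
  have h : ∀ s t : V, (if G.Adj s t then deg G s * deg G t else 0)
      = a G s t * (deg G s * deg G t) := by
    intro s t; unfold a; split <;> simp
  simp_rw [h]; ring



theorem stmt7 (G : SimpleGraph V) [DecidableRel G.Adj] :
    Qsum G (fun s t u v => deg G s + deg G t + deg G u + deg G v) =
      ((G.edgeFinset.card : ℚ) + 1) * (∑ v, (deg G v) ^ 2) - (∑ v, (deg G v) ^ 3)
        - 2 * edgeSum G (fun s t => deg G s * deg G t) := by
  unfold Qsum
  rw [quad, sum_deg, edgeSum_eq]
  ring

end CrossVar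
end

section
/- In any simple graph G, Φ₂ := ∑_{{st,uv}∈Q} (k_s + k_t)(k_u + k_v) = (1/2) ∑_{st∈E} (k_s + k_t)( n⟨k²⟩ - ξ(s) - ξ(t) - k_s(k_s - 1) - k_t(k_t - 1) ), where ξ(v) = ∑_{u∈Γ(v)} k_u. -/
open Finset BigOperators SimpleGraph

namespace CrossVar

variable {V : Type} [Fintype V] [DecidableEq V]

set_option linter.unusedSectionVars false

section Aux
variable (G : SimpleGraph V) [DecidableRel G.Adj]
lemma sum_ind_one (s : V) : ∑ v, (if G.Adj s v then (1:ℚ) else 0) = deg G s := by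
  rw [Finset.sum_boole, deg, SimpleGraph.degree, neighborFinset_eq_filter]

lemma sum_ind_deg (s : V) : ∑ v, (if G.Adj s v then deg G v else 0) = xi G s := by
  rw [xi, neighborFinset_eq_filter, Finset.sum_filter]

lemma sum_ind_sum (s : V) :
    ∑ v, (if G.Adj s v then deg G s + deg G v else 0) = deg G s * deg G s + xi G s := by
  have : ∀ v, (if G.Adj s v then deg G s + deg G v else 0)
      = deg G s * (if G.Adj s v then (1:ℚ) else 0) + (if G.Adj s v then deg G v else 0) := by
    intro v; split_ifs <;> ring
  simp only [this, Finset.sum_add_distrib, ← Finset.mul_sum, sum_ind_one, sum_ind_deg]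

lemma sum_xi : ∑ u, xi G u = ∑ v, deg G v * deg G v := by
  simp only [← sum_ind_deg]
  rw [Finset.sum_comm]
  congr 1; funext v
  have : ∀ u, (if G.Adj u v then deg G v else 0) = deg G v * (if G.Adj v u then (1:ℚ) else 0) := by
    intro u
    by_cases h : G.Adj u v
    · have h' : G.Adj v u := h.symm
      simp [h, h']
    · have h' : ¬ G.Adj v u := fun hh => h hh.symm
      simp [h, h']
  simp only [this, ← Finset.mul_sum, sum_ind_one]

lemma total :
    ∑ u, ∑ v, (if G.Adj u v then deg G u + deg G v else 0) = 2 * ∑ v, deg G v ^ 2 := by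
  have h1 : ∀ u, ∑ v, (if G.Adj u v then deg G u + deg G v else 0)
      = deg G u * deg G u + xi G u := sum_ind_sum G
  simp only [h1, Finset.sum_add_distrib]
  simp only [sum_xi, pow_two]; ring


lemma sum_ite_const (c : Prop) [Decidable c] (f : V → ℚ) :
    ∑ v, (if c then f v else 0) = if c then ∑ v, f v else 0 := by
  split_ifs <;> simp

set_option maxHeartbeats 1000000 in
lemma inner_sum (s t : V) (hst : G.Adj s t) :
    ∑ u, ∑ v, (if G.Adj u v ∧ s ≠ u ∧ s ≠ v ∧ t ≠ u ∧ t ≠ v then deg G u + deg G v else 0)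
      = 2 * ((∑ v, deg G v ^ 2) - xi G s - xi G t
          - deg G s * (deg G s - 1) - deg G t * (deg G t - 1)) := by
  have hne : s ≠ t := hst.ne
  have key : ∀ u v : V,
      (if G.Adj u v ∧ s ≠ u ∧ s ≠ v ∧ t ≠ u ∧ t ≠ v then deg G u + deg G v else 0)
      = (if G.Adj u v then deg G u + deg G v else 0)
        - (if s = u then (if G.Adj s v then deg G s + deg G v else 0) else 0)
        - (if t = u then (if G.Adj t v then deg G t + deg G v else 0) else 0)
        - (if s = v then (if G.Adj u s then deg G u + deg G s else 0) else 0)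
        - (if t = v then (if G.Adj u t then deg G u + deg G t else 0) else 0)
        + (if s = u then (if t = v then (if G.Adj s t then deg G s + deg G t else 0) else 0) else 0)
        + (if t = u then (if s = v then (if G.Adj t s then deg G t + deg G s else 0) else 0) else 0) := by
    intro u v
    by_cases h : G.Adj u v
    · have huv : u ≠ v := h.ne
      by_cases h1 : s = u <;> by_cases h2 : s = v <;> by_cases h3 : t = u <;> by_cases h4 : t = v <;>
        subst_vars <;> simp_all <;> ring
    · by_cases h1 : s = u <;> by_cases h2 : s = v <;> by_cases h3 : t = u <;> by_cases h4 : t = v <;>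
        subst_vars <;> simp_all
  simp only [key, Finset.sum_sub_distrib, Finset.sum_add_distrib, sum_ite_const,
    Finset.sum_ite_eq, Finset.mem_univ, if_true, total, sum_ind_sum]
  have d1 : ∑ u, (if G.Adj u s then deg G u + deg G s else 0) = deg G s * deg G s + xi G s := by
    rw [← sum_ind_sum]
    congr 1; funext u
    by_cases h : G.Adj s u
    · have h' : G.Adj u s := h.symm
      simp [h, h']; ring
    · have h' : ¬ G.Adj u s := fun hh => h hh.symm
      simp [h, h']
  have d2 : ∑ u, (if G.Adj u t then deg G u + deg G t else 0) = deg G t * deg G t + xi G t := by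
    rw [← sum_ind_sum]
    congr 1; funext u
    by_cases h : G.Adj t u
    · have h' : G.Adj u t := h.symm
      simp [h, h']; ring
    · have h' : ¬ G.Adj u t := fun hh => h hh.symm
      simp [h, h']
  rw [d1, d2]
  have hts : G.Adj t s := hst.symm
  simp only [hst, hts, if_true]
  rw [sum_xi]
  simp only [pow_two]
  ring


end Aux

theorem stmt9 (G : SimpleGraph V) [DecidableRel G.Adj] :
    Qsum G (fun s t u v => (deg G s + deg G t) * (deg G u + deg G v)) =
      (1 / 2) * edgeSum G (fun s t =>
        (deg G s + deg G t) *
          ((∑ v, (deg G v) ^ 2) - xi G s - xi G t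
            - deg G s * (deg G s - 1) - deg G t * (deg G t - 1))) := by
  have step : ∀ s t : V,
      ∑ u, ∑ v, (if G.Adj s t ∧ G.Adj u v ∧ s ≠ u ∧ s ≠ v ∧ t ≠ u ∧ t ≠ v then
          (deg G s + deg G t) * (deg G u + deg G v) else 0)
      = if G.Adj s t then (deg G s + deg G t) *
          (2 * ((∑ v, deg G v ^ 2) - xi G s - xi G t
            - deg G s * (deg G s - 1) - deg G t * (deg G t - 1))) else 0 := by
    intro s t
    by_cases h : G.Adj s t
    · simp only [h, true_and, if_true]
      rw [← inner_sum G s t h, Finset.mul_sum]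
      congr 1; funext u
      rw [Finset.mul_sum]
      congr 1; funext v
      split_ifs <;> ring
    · simp [h]
  have step2 : ∀ s t : V,
      (if G.Adj s t then (deg G s + deg G t) *
          (2 * ((∑ v, deg G v ^ 2) - xi G s - xi G t
            - deg G s * (deg G s - 1) - deg G t * (deg G t - 1))) else 0)
      = 2 * (if G.Adj s t then (deg G s + deg G t) *
          ((∑ v, deg G v ^ 2) - xi G s - xi G t
            - deg G s * (deg G s - 1) - deg G t * (deg G t - 1)) else 0) := by
    intro s t; split_ifs <;> ring
  unfold Qsum edgeSum
  simp only [step, step2, ← Finset.mul_sum]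
  ring

end CrossVar
end

section
/- In any simple graph G, n_G(P₄) = m - n⟨k²⟩ + (1/2)∑_{st∈E}(ξ(s)+ξ(t)) - ∑_{st∈E}|Γ(s)∩Γ(t)|, where ξ(v) = ∑_{u∈Γ(v)} k_u. -/
open Finset BigOperators SimpleGraph

/-!
A labelled copy of `P₄` in `G` is a path `s t u v` on four distinct vertices, and every
unlabelled copy carries exactly `|Aut P₄| = 2` labellings. Grouping labelled paths by their
middle ordered edge `tu`, the ends are `s ∈ Γ(t) \ {u}` and `v ∈ Γ(u) \ {t}` with `s ≠ v`, which
gives `(k_t - 1)(k_u - 1) - |Γ(t) ∩ Γ(u)|` choices. Summed over ordered edges,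
`∑ k_t k_u = ∑_v k_v ξ(v)`, `∑ k_t = ∑ k_u = n⟨k²⟩` and `∑ 1 = 2m`.
-/

lemma Finset.card_filter_ne_product_add_card_inter {α : Type*} [DecidableEq α] (A B : Finset α) :
    #{p ∈ A ×ˢ B | p.1 ≠ p.2} + #(A ∩ B) = #A * #B := by
  rw [← card_product, ← card_filter_add_card_filter_not (s := A ×ˢ B) (fun p => p.1 ≠ p.2)]
  congr 1
  refine card_nbij' (fun a => (a, a)) Prod.fst ?_ ?_ (fun _ _ => rfl) ?_
  · intro a ha; simp_all
  all_goals rintro ⟨a, b⟩ h; simp only [coe_filter, mem_product, not_not] at h; aesop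

namespace SimpleGraph

section Copies

variable {V W : Type*} {G : SimpleGraph V} {H : SimpleGraph W}

lemma Copy.coe_cast_isoToSubgraph (f : Copy H G) {G' : G.Subgraph} (hf : f.toSubgraph = G')
    (a : W) : ((hf ▸ f.isoToSubgraph : H ≃g G'.coe) a : V) = f a := by
  subst hf; rfl

noncomputable def Copy.toSubgraphFiberEquiv (G' : G.Subgraph) :
    {f : Copy H G // f.toSubgraph = G'} ≃ (H ≃g G'.coe) where
  toFun f := f.2 ▸ f.1.isoToSubgraph
  invFun e := ⟨G'.coeCopy.comp e.toCopy,
    show Subgraph.map (G'.hom.comp e.toHom) ⊤ = G' by simp [Subgraph.map_comp]⟩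
  left_inv := by
    rintro ⟨f, hf⟩
    ext a
    exact f.coe_cast_isoToSubgraph hf a
  right_inv e := by
    ext a
    exact Copy.coe_cast_isoToSubgraph _ _ a

theorem natCard_copy_eq_natCard_mul_natCard_aut (G : SimpleGraph V) (H : SimpleGraph W) :
    Nat.card (Copy H G) =
      Nat.card {G' : G.Subgraph // Nonempty (G'.coe ≃g H)} * Nat.card (H ≃g H) := by
  let image : Copy H G → {G' : G.Subgraph // Nonempty (G'.coe ≃g H)} :=
    fun f => ⟨f.toSubgraph, ⟨f.isoToSubgraph.symm⟩⟩
  have fiber (G' : {G' : G.Subgraph // Nonempty (G'.coe ≃g H)}) :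
      {f // image f = G'} ≃ (H ≃g H) :=
    (Equiv.subtypeEquivRight fun _ => Subtype.ext_iff).trans <|
      (Copy.toSubgraphFiberEquiv G'.1).trans (RelIso.relIsoCongr (RelIso.refl _) G'.2.some)
  rw [← Nat.card_prod]
  exact Nat.card_congr <| (Equiv.sigmaFiberEquiv image).symm.trans <|
    (Equiv.sigmaCongrRight fiber).trans (Equiv.sigmaEquivProd _ _)

end Copies

lemma natCard_aut_pathGraph_four : Nat.card (pathGraph 4 ≃g pathGraph 4) = 2 := by
  let e : (pathGraph 4 ≃g pathGraph 4) ≃ {σ : Equiv.Perm (Fin 4) //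
      ∀ i j, (σ i).val + 1 = σ j ∨ (σ j).val + 1 = σ i ↔ i.val + 1 = j ∨ j.val + 1 = i} :=
    ⟨fun e => ⟨e.toEquiv, fun _ _ => pathGraph_adj.symm.trans (e.map_rel_iff.trans pathGraph_adj)⟩,
      fun σ => ⟨σ.1, pathGraph_adj.trans ((σ.2 _ _).trans pathGraph_adj.symm)⟩,
      fun _ => rfl, fun _ => rfl⟩
  rw [Nat.card_congr e, Nat.card_eq_fintype_card]
  decide

variable {V : Type*} [Fintype V] (G : SimpleGraph V) [DecidableRel G.Adj]

lemma sum_neighborFinset_eq_sum_ite {M : Type*} [AddCommMonoid M] (t : V) (f : V → M) :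
    ∑ u ∈ G.neighborFinset t, f u = ∑ u, if G.Adj t u then f u else 0 := by
  rw [neighborFinset_eq_filter, sum_filter]

lemma sum_sum_neighborFinset_comm {M : Type*} [AddCommMonoid M] (f : V → V → M) :
    ∑ s, ∑ t ∈ G.neighborFinset s, f s t = ∑ t, ∑ s ∈ G.neighborFinset t, f s t :=
  sum_comm' fun _ _ => by simp [G.adj_comm]

lemma sum_sum_neighborFinset_apply_left {M : Type*} [AddCommMonoid M] (g : V → M) :
    ∑ s, ∑ _ ∈ G.neighborFinset s, g s = ∑ s, G.degree s • g s := by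
  simp

lemma sum_sum_neighborFinset_apply_right {M : Type*} [AddCommMonoid M] (g : V → M) :
    ∑ s, ∑ t ∈ G.neighborFinset s, g t = ∑ t, G.degree t • g t := by
  simp [G.sum_sum_neighborFinset_comm (fun _ t => g t)]

variable [DecidableEq V]

def pathEnds (t u : V) : Finset (V × V) :=
  {p ∈ (G.neighborFinset t).erase u ×ˢ (G.neighborFinset u).erase t | p.1 ≠ p.2}

lemma mem_pathEnds {t u s v : V} :
    (s, v) ∈ G.pathEnds t u ↔ G.Adj s t ∧ G.Adj u v ∧ s ≠ u ∧ s ≠ v ∧ t ≠ v := by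
  simp only [pathEnds, mem_filter, mem_product, mem_erase, mem_neighborFinset]
  constructor
  · rintro ⟨⟨⟨hsu, hts⟩, hvt, huv⟩, hsv⟩
    exact ⟨hts.symm, huv, hsu, hsv, Ne.symm hvt⟩
  · rintro ⟨hst, huv, hsu, hsv, htv⟩
    exact ⟨⟨⟨hsu, hst.symm⟩, Ne.symm htv, huv⟩, hsv⟩

lemma card_pathEnds_add_card_inter {t u : V} (h : G.Adj t u) :
    #(G.pathEnds t u) + #(G.neighborFinset t ∩ G.neighborFinset u) =
      (G.degree t - 1) * (G.degree u - 1) := by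
  have hinter : (G.neighborFinset t).erase u ∩ (G.neighborFinset u).erase t =
      G.neighborFinset t ∩ G.neighborFinset u := by
    ext x
    simp only [mem_inter, mem_erase, mem_neighborFinset]
    exact ⟨fun ⟨⟨_, htx⟩, _, hux⟩ => ⟨htx, hux⟩,
      fun ⟨htx, hux⟩ => ⟨⟨hux.ne', htx⟩, htx.ne', hux⟩⟩
  rw [pathEnds, ← hinter, card_filter_ne_product_add_card_inter,
    card_erase_of_mem (G.mem_neighborFinset t u |>.mpr h),
    card_erase_of_mem (G.mem_neighborFinset u t |>.mpr h.symm),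
    card_neighborFinset_eq_degree, card_neighborFinset_eq_degree]

variable {G} in
def copyOfPath {s t u v : V} (hst : G.Adj s t) (htu : G.Adj t u) (huv : G.Adj u v)
    (hsu : s ≠ u) (hsv : s ≠ v) (htv : t ≠ v) : Copy (pathGraph 4) G := by
  refine ⟨⟨![s, t, u, v], fun {i j} hij => ?_⟩, fun i j hij => ?_⟩
  · rw [pathGraph_adj] at hij
    fin_cases i <;> fin_cases j <;> simp_all [G.adj_comm]
  · have := G.ne_of_adj hst; have := G.ne_of_adj htu; have := G.ne_of_adj huv
    fin_cases i <;> fin_cases j <;> simp_all [eq_comm]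

def copyPathGraphFourEquiv : Copy (pathGraph 4) G ≃
    {x : (V × V) × (V × V) // G.Adj x.1.1 x.1.2 ∧ x.2 ∈ G.pathEnds x.1.1 x.1.2} where
  toFun f := ⟨((f 1, f 2), (f 0, f 3)), by
    have adj (i j : Fin 4) (h : i.val + 1 = j.val := by decide) : G.Adj (f i) (f j) :=
      f.toHom.map_adj (pathGraph_adj.mpr (Or.inl h))
    have ne (i j : Fin 4) (h : i ≠ j := by decide) : f i ≠ f j := f.injective.ne h
    exact ⟨adj 1 2, G.mem_pathEnds.mpr ⟨adj 0 1, adj 2 3, ne 0 2, ne 0 3, ne 1 3⟩⟩⟩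
  invFun x :=
    have h := G.mem_pathEnds.mp x.2.2
    copyOfPath h.1 x.2.1 h.2.1 h.2.2.1 h.2.2.2.1 h.2.2.2.2
  left_inv f := by
    ext i
    fin_cases i <;> rfl
  right_inv _ := rfl

lemma natCard_copy_pathGraph_four :
    Nat.card (Copy (pathGraph 4) G) = ∑ t, ∑ u ∈ G.neighborFinset t, #(G.pathEnds t u) := by
  rw [Nat.card_congr G.copyPathGraphFourEquiv, Nat.card_eq_fintype_card, Fintype.card_subtype,
    card_filter, Fintype.sum_prod_type, Fintype.sum_prod_type]
  refine sum_congr rfl fun t _ => ?_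
  rw [sum_neighborFinset_eq_sum_ite]
  refine sum_congr rfl fun u _ => ?_
  by_cases h : G.Adj t u <;> simp [h]

end SimpleGraph

namespace CrossVar

variable {V : Type} [Fintype V]

lemma edgeSum_eq_sum_neighborFinset (G : SimpleGraph V) [DecidableRel G.Adj]
    (f : V → V → ℚ) : edgeSum G f = (∑ s, ∑ t ∈ G.neighborFinset s, f s t) / 2 := by
  simp only [edgeSum, sum_neighborFinset_eq_sum_ite]

variable [DecidableEq V]

lemma two_mul_copyCount_pathGraph_four (G : SimpleGraph V) [DecidableRel G.Adj] :
    2 * (copyCount G (pathGraph 4) : ℚ) = ∑ t, ∑ u ∈ G.neighborFinset t,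
      ((deg G t - 1) * (deg G u - 1) - #(G.neighborFinset t ∩ G.neighborFinset u)) := by
  have hcopies : 2 * copyCount G (pathGraph 4) = Nat.card (Copy (pathGraph 4) G) := by
    rw [natCard_copy_eq_natCard_mul_natCard_aut, natCard_aut_pathGraph_four, mul_comm, copyCount]
  rw [← Nat.cast_two, ← Nat.cast_mul, hcopies, natCard_copy_pathGraph_four, Nat.cast_sum]
  refine sum_congr rfl fun t _ => ?_
  rw [Nat.cast_sum]
  refine sum_congr rfl fun u hu => ?_
  have h := (G.mem_neighborFinset t u).mp hu
  have : 1 ≤ G.degree t := G.degree_pos_iff_exists_adj t |>.mpr ⟨u, h⟩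
  have : 1 ≤ G.degree u := G.degree_pos_iff_exists_adj u |>.mpr ⟨t, h.symm⟩
  rw [eq_sub_iff_add_eq, deg, deg]
  exact_mod_cast G.card_pathEnds_add_card_inter h

theorem stmt15 (G : SimpleGraph V) [DecidableRel G.Adj] :
    (copyCount G (pathGraph 4) : ℚ) =
      (G.edgeFinset.card : ℚ) - (∑ v, (deg G v) ^ 2)
        + (1 / 2) * edgeSum G (fun s t => xi G s + xi G t)
        - edgeSum G (fun s t => ((G.neighborFinset s ∩ G.neighborFinset t).card : ℚ)) := by
  have hcount := two_mul_copyCount_pathGraph_four G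
  have hdeg : ∑ t, (G.degree t : ℚ) = 2 * (G.edgeFinset.card : ℚ) := by
    exact_mod_cast G.sum_degrees_eq_twice_card_edges
  have hxi : ∑ t, ∑ u ∈ G.neighborFinset t, deg G t * deg G u = ∑ t, deg G t * xi G t := by
    simp only [xi, mul_sum]
  simp only [mul_sub, sub_mul, one_mul, mul_one, sum_sub_distrib, hxi,
    sum_sum_neighborFinset_apply_left, sum_sum_neighborFinset_apply_right, nsmul_eq_mul] at hcount
  simp only [edgeSum_eq_sum_neighborFinset, sum_add_distrib, sum_sum_neighborFinset_apply_left,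
    sum_sum_neighborFinset_apply_right, nsmul_eq_mul, sq]
  simp only [deg] at hcount ⊢
  linarith

end CrossVar
end

section
/- In any simple graph G, Λ₂ := ∑_{{st,uv}∈Q} (a_{su}+a_{sv}+a_{tu}+a_{tv})(k_s+k_t+k_u+k_v) satisfies Λ₂ = Λ₁ + ∑_{st∈E} (k_s+k_t)( (k_s−1)(k_t−1) − |Γ(s)∩Γ(t)| ), where Λ₁ = ∑_{{st,uv}∈Q} [a_{su}(k_t+k_v)+a_{sv}(k_t+k_u)+a_{tu}(k_s+k_v)+a_{tv}(k_s+k_u)]. -/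
/-!
Expanding the products, `Λ₂ - Λ₁` is the `Q`-sum of
`a_{su}(k_s+k_u) + a_{sv}(k_s+k_v) + a_{tu}(k_t+k_u) + a_{tv}(k_t+k_v)`, and the symmetries
`s ↔ t`, `u ↔ v` of `Q` make the four terms contribute equally. For an edge `su`, the pairs
`(t, v)` with `{st, uv} ∈ Q` are those with `t ∈ Γ(s) ∖ {u}`, `v ∈ Γ(u) ∖ {s}` and `t ≠ v`; there are
`(k_s - 1)(k_u - 1) - |Γ(s) ∩ Γ(u)|` of them, since `t = v` happens exactly on `Γ(s) ∩ Γ(u)`.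
-/

open Finset BigOperators SimpleGraph

namespace CrossVar

variable {V : Type} [Fintype V] [DecidableEq V]

theorem _root_.Finset.card_filter_ne_product_add_card_inter_s17 {α : Type*} [DecidableEq α]
    (A B : Finset α) : #{p ∈ A ×ˢ B | p.1 ≠ p.2} + #(A ∩ B) = #A * #B := by
  have hdiag : #{p ∈ A ×ˢ B | p.1 = p.2} = #(A ∩ B) :=
    card_nbij' Prod.fst (fun x => (x, x))
      (fun p hp => by
        simp only [coe_filter, mem_product, Set.mem_ofPred_eq] at hp
        exact mem_inter.2 ⟨hp.1.1, hp.2 ▸ hp.1.2⟩)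
      (fun x hx => by simp_all)
      (fun p hp => by simp_all [Prod.ext_iff])
      (fun x _ => rfl)
  rw [← hdiag, add_comm, card_filter_add_card_filter_not, card_product]

def extensionPairs (G : SimpleGraph V) [DecidableRel G.Adj] (s u : V) : Finset (V × V) :=
  {p ∈ (G.neighborFinset s).erase u ×ˢ (G.neighborFinset u).erase s | p.1 ≠ p.2}

lemma card_extensionPairs (G : SimpleGraph V) [DecidableRel G.Adj] {s u : V} (h : G.Adj s u) :
    (#(extensionPairs G s u) : ℚ) =
      (deg G s - 1) * (deg G u - 1) - #(G.neighborFinset s ∩ G.neighborFinset u) := by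
  have hu : u ∈ G.neighborFinset s := (mem_neighborFinset G s u).2 h
  have hs : s ∈ G.neighborFinset u := (mem_neighborFinset G u s).2 h.symm
  have hinter : (G.neighborFinset s).erase u ∩ (G.neighborFinset u).erase s =
      G.neighborFinset s ∩ G.neighborFinset u := by
    ext x
    simp only [mem_inter, mem_erase, mem_neighborFinset]
    exact ⟨fun h => ⟨h.1.2, h.2.2⟩, fun h => ⟨⟨h.2.ne', h.1⟩, h.1.ne', h.2⟩⟩
  have key := congrArg (Nat.cast (R := ℚ)) (Finset.card_filter_ne_product_add_card_inter_s17
    ((G.neighborFinset s).erase u) ((G.neighborFinset u).erase s))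
  rw [hinter, card_erase_of_mem hu, card_erase_of_mem hs, card_neighborFinset_eq_degree,
    card_neighborFinset_eq_degree] at key
  push_cast [Nat.cast_sub (G.degree_pos_iff_exists_adj s |>.2 ⟨u, h⟩),
    Nat.cast_sub (G.degree_pos_iff_exists_adj u |>.2 ⟨s, h.symm⟩)] at key
  rw [extensionPairs, deg, deg]
  linarith

section Qsum

variable (G : SimpleGraph V) [DecidableRel G.Adj]

lemma Qsum_add (f g : V → V → V → V → ℚ) :
    Qsum G (fun s t u v => f s t u v + g s t u v) = Qsum G f + Qsum G g := by
  simp only [Qsum, ← add_div, ← sum_add_distrib, ite_add_zero]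

lemma Qsum_swap_left (f : V → V → V → V → ℚ) :
    Qsum G (fun s t u v => f t s u v) = Qsum G f := by
  rw [Qsum, sum_comm]
  congr 1
  refine sum_congr rfl fun t _ => sum_congr rfl fun s _ =>
    sum_congr rfl fun u _ => sum_congr rfl fun v _ => if_congr ?_ rfl rfl
  constructor <;> rintro ⟨hst, huv, h1, h2, h3, h4⟩ <;> exact ⟨hst.symm, huv, h3, h4, h1, h2⟩

lemma Qsum_swap_right (f : V → V → V → V → ℚ) :
    Qsum G (fun s t u v => f s t v u) = Qsum G f := by
  rw [Qsum]
  congr 1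
  refine sum_congr rfl fun s _ => sum_congr rfl fun t _ => ?_
  rw [sum_comm]
  refine sum_congr rfl fun u _ => sum_congr rfl fun v _ => if_congr ?_ rfl rfl
  constructor <;> rintro ⟨hst, huv, h1, h2, h3, h4⟩ <;> exact ⟨hst, huv.symm, h2, h1, h4, h3⟩

lemma Qsum_symmetrize (g : V → V → ℚ) :
    Qsum G (fun s t u v => g s u + g s v + g t u + g t v) = 4 * Qsum G (fun s _ u _ => g s u) := by
  rw [Qsum_add, Qsum_add, Qsum_add, Qsum_swap_left G (fun s _ u _ => g s u),
    Qsum_swap_left G (fun s _ _ v => g s v), Qsum_swap_right G (fun s _ u _ => g s u)]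
  ring

lemma Qsum_adj_mul (h : V → V → ℚ) :
    Qsum G (fun s _ u _ => a G s u * h s u) =
      edgeSum G (fun s u => h s u *
        ((deg G s - 1) * (deg G u - 1) - #(G.neighborFinset s ∩ G.neighborFinset u))) / 4 := by
  have inner : ∀ s u, (∑ t, ∑ v,
      if G.Adj s t ∧ G.Adj u v ∧ s ≠ u ∧ s ≠ v ∧ t ≠ u ∧ t ≠ v then a G s u * h s u else 0) =
      if G.Adj s u then h s u *
        ((deg G s - 1) * (deg G u - 1) - #(G.neighborFinset s ∩ G.neighborFinset u)) else 0 := by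
    intro s u
    by_cases hsu : G.Adj s u
    · have hmem : ∀ t v, (G.Adj s t ∧ G.Adj u v ∧ s ≠ u ∧ s ≠ v ∧ t ≠ u ∧ t ≠ v) ↔
          (t, v) ∈ extensionPairs G s u := by
        intro t v
        simp only [extensionPairs, mem_filter, mem_product, mem_erase, mem_neighborFinset]
        exact ⟨fun ⟨hst, huv, _, hsv, htu, htv⟩ => ⟨⟨⟨htu, hst⟩, hsv.symm, huv⟩, htv⟩,
          fun ⟨⟨⟨htu, hst⟩, hvs, huv⟩, htv⟩ => ⟨hst, huv, hsu.ne, hvs.symm, htu, htv⟩⟩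
      simp only [if_congr (hmem _ _) rfl rfl, ← Fintype.sum_prod_type', sum_ite_mem, univ_inter,
        sum_const, nsmul_eq_mul, a, if_pos hsu, card_extensionPairs G hsu]
      ring
    · simp [a, hsu]
  rw [Qsum, edgeSum,
    sum_congr rfl fun s _ => sum_comm.trans (sum_congr rfl fun u _ => inner s u)]
  ring

end Qsum

theorem stmt17 (G : SimpleGraph V) [DecidableRel G.Adj] :
    Qsum G (fun s t u v =>
        (a G s u + a G s v + a G t u + a G t v) * (deg G s + deg G t + deg G u + deg G v)) =
      Qsum G (fun s t u v =>
        a G s u * (deg G t + deg G v) + a G s v * (deg G t + deg G u)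
          + a G t u * (deg G s + deg G v) + a G t v * (deg G s + deg G u))
      + edgeSum G (fun s t =>
          (deg G s + deg G t) *
            ((deg G s - 1) * (deg G t - 1)
              - ((G.neighborFinset s ∩ G.neighborFinset t).card : ℚ))) := by
  have hdiff : edgeSum G (fun s t => (deg G s + deg G t) *
        ((deg G s - 1) * (deg G t - 1) - ((G.neighborFinset s ∩ G.neighborFinset t).card : ℚ))) =
      Qsum G (fun s t u v => a G s u * (deg G s + deg G u) + a G s v * (deg G s + deg G v)
        + a G t u * (deg G t + deg G u) + a G t v * (deg G t + deg G v)) := by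
    rw [Qsum_symmetrize G (fun s u => a G s u * (deg G s + deg G u)), Qsum_adj_mul]
    ring
  rw [hdiff, ← Qsum_add]
  congr 1
  funext s t u v
  ring

end CrossVar
end

section
/- In any tree T, the number of subgraphs isomorphic to the path P₅ on 5 vertices equals (1/2) ∑_{st∈E} [ (k_t−1)(ξ(s)−k_t−k_s+1) + (k_s−1)(ξ(t)−k_s−k_t+1) ], where ξ(v) = ∑_{u∈Γ(v)} k_u. -/
open Finset BigOperators SimpleGraph

namespace CrossVar

variable {V : Type} [Fintype V] [DecidableEq V]

/-!
A copy of `P₅` in `G` is the image of exactly `|Aut P₅| = 2` injective homomorphisms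
`pathGraph 5 → G`, which differ by the reversal of the path. Since a tree has no cycles, such a
homomorphism is the same thing as a non-backtracking walk `w u s t x`. Count these walks by their
oriented middle edge `st`: `x` is one of the `k_t - 1` neighbours of `t` other than `s`, and
`(u, w)` is one of `∑_{u ∈ Γ(s) \ {t}} (k_u - 1) = ξ(s) - k_t - k_s + 1` choices. Summing over
the ordered edges, i.e. over both orientations of every edge, gives twice the number of copies.
-/

section Copy

variable {α β : Type*} {A : SimpleGraph α} {B : SimpleGraph β}

theorem _root_.SimpleGraph.Copy.toSubgraph_adj_iff (f : Copy A B) {a b : α} :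
    f.toSubgraph.Adj (f a) (f b) ↔ A.Adj a b := by
  simp only [Subgraph.map_adj, Subgraph.top_adj, Relation.map_apply]
  exact ⟨fun ⟨_, _, h, ha, hb⟩ => f.injective ha ▸ f.injective hb ▸ h, fun h => ⟨a, b, h, rfl, rfl⟩⟩

theorem _root_.SimpleGraph.Copy.toSubgraph_comp_iso_s19 (f : Copy A B) (σ : A ≃g A) :
    (f.comp σ.toCopy).toSubgraph = f.toSubgraph := by
  simp [Copy.toSubgraph, Copy.comp, Subgraph.map_comp]

theorem _root_.SimpleGraph.Copy.exists_iso_of_toSubgraph_eq {f g : Copy A B}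
    (h : f.toSubgraph = g.toSubgraph) : ∃ σ : A ≃g A, g = f.comp σ.toCopy := by
  have hrange : Set.range g = Set.range f := by
    simpa using congrArg Subgraph.verts h.symm
  let e : α ≃ α := (Equiv.ofInjective g g.injective).trans
    ((Equiv.setCongr hrange).trans (Equiv.ofInjective f f.injective).symm)
  have he : ∀ a, f (e a) = g a := fun a => Equiv.apply_ofInjective_symm f.injective _
  refine ⟨⟨e, fun {a b} => ?_⟩, Copy.ext fun a => (he a).symm⟩
  rw [← f.toSubgraph_adj_iff, he, he, h, g.toSubgraph_adj_iff]

noncomputable def _root_.SimpleGraph.Copy.isoEquivToSubgraphFiber_s19 (f : Copy A B) :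
    (A ≃g A) ≃ {g : Copy A B // g.toSubgraph = f.toSubgraph} :=
  Equiv.ofBijective (fun σ => ⟨f.comp σ.toCopy, f.toSubgraph_comp_iso_s19 σ⟩)
    ⟨fun _ _ h => RelIso.ext fun a => f.injective (congrArg (· a) (Subtype.ext_iff.mp h)),
     fun g => let ⟨σ, hσ⟩ := Copy.exists_iso_of_toSubgraph_eq g.2.symm; ⟨σ, Subtype.ext hσ.symm⟩⟩

theorem _root_.SimpleGraph.Copy.natCard_eq_mul_natCard_iso :
    Nat.card (Copy A B) =
      Nat.card {S : B.Subgraph // Nonempty (S.coe ≃g A)} * Nat.card (A ≃g A) := by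
  let F : Copy A B → {S : B.Subgraph // Nonempty (S.coe ≃g A)} :=
    fun g => ⟨g.toSubgraph, ⟨g.isoToSubgraph.symm⟩⟩
  have hF (S : {S : B.Subgraph // Nonempty (S.coe ≃g A)}) :
      S.1 ∈ Set.range (Copy.toSubgraph (A := A)) := by
    rw [Copy.range_toSubgraph]; exact ⟨S.2.some.symm⟩
  choose f hf using hF
  calc Nat.card (Copy A B) = Nat.card (Σ S, {g // F g = S}) :=
        Nat.card_congr (Equiv.sigmaFiberEquiv F).symm
    _ = Nat.card (Σ _ : {S : B.Subgraph // Nonempty (S.coe ≃g A)}, A ≃g A) :=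
        Nat.card_congr <| Equiv.sigmaCongrRight fun S =>
          ((Equiv.subtypeEquivRight fun g => by rw [hf S, Subtype.ext_iff]).trans
            (f S).isoEquivToSubgraphFiber_s19.symm)
    _ = _ := by rw [Nat.card_congr (Equiv.sigmaEquivProd _ _), Nat.card_prod]

end Copy

theorem eq_add_mul_of_nonbacktracking {n : ℕ} {v : ℕ → ℤ}
    (hstep : ∀ i, i + 1 < n → v (i + 1) - v i = 1 ∨ v i - v (i + 1) = 1)
    (hne : ∀ i, i + 1 + 1 < n → v i ≠ v (i + 1 + 1)) :
    ∀ i < n, v i = v 0 + (v 1 - v 0) * i := by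
  have hconst (i : ℕ) (hi : i + 1 < n) : v (i + 1) - v i = v 1 - v 0 := by
    induction i with
    | zero => rfl
    | succ i ih =>
      -- two consecutive `±1` steps with `v (i + 2) ≠ v i` have the same sign
      have := ih (by omega); have := hstep i (by omega); have := hstep (i + 1) hi
      have := hne i hi; omega
  intro i hi
  induction i with
  | zero => simp
  | succ i ih => have := ih (by omega); have := hconst i hi; push_cast; linarith

def _root_.SimpleGraph.pathGraph.reverse (n : ℕ) : pathGraph n ≃g pathGraph n where
  toEquiv := Fin.revPerm
  map_rel_iff' := by simp only [Fin.revPerm_apply, pathGraph_adj, Fin.val_rev]; omega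

theorem _root_.SimpleGraph.pathGraph.iso_eq_refl_or_reverse {n : ℕ}
    (σ : pathGraph n ≃g pathGraph n) : σ = Iso.refl ∨ σ = pathGraph.reverse n := by
  rcases Nat.lt_or_ge n 2 with hn | hn
  · exact Or.inl <| RelIso.ext fun i => by ext; have := (σ i).isLt; have := i.isLt; simp; omega
  let v (i : ℕ) : ℤ := if h : i < n then (σ ⟨i, h⟩ : ℕ) else 0
  have hv (i : Fin n) : v i = (σ i : ℕ) := by simp [v, i.isLt]
  have hstep (i : ℕ) (hi : i + 1 < n) : v (i + 1) - v i = 1 ∨ v i - v (i + 1) = 1 := by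
    have := pathGraph_adj.1 (σ.map_adj_iff.2 (pathGraph_adj.2 (Or.inl rfl :
      (⟨i, by omega⟩ : Fin n).val + 1 = (⟨i + 1, hi⟩ : Fin n).val ∨ _)))
    rw [hv ⟨i, by omega⟩, hv ⟨i + 1, hi⟩]; omega
  have hlin := eq_add_mul_of_nonbacktracking hstep fun i hi => by
    rw [hv ⟨i, by omega⟩, hv ⟨i + 1 + 1, hi⟩, Ne, Nat.cast_inj, ← Fin.ext_iff,
      σ.injective.eq_iff, Fin.ext_iff]
    dsimp only; omega
  have hσ (i : Fin n) : ((σ i : ℕ) : ℤ) = v 0 + (v 1 - v 0) * (i : ℕ) := by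
    rw [← hv, hlin i i.isLt]
  -- `σ` is affine of slope `±1` on `{0, …, n - 1}`, and its endpoint values pin it down
  have h0 := hσ ⟨0, by omega⟩; have hl := hσ ⟨n - 1, by omega⟩
  have := (σ ⟨0, by omega⟩).isLt; have := (σ ⟨n - 1, by omega⟩).isLt
  simp only [Nat.cast_zero, mul_zero, add_zero, Nat.cast_sub (by omega : 1 ≤ n),
    Nat.cast_one] at h0 hl
  rcases hstep 0 hn with hd | hd
  · left
    refine RelIso.ext fun i => Fin.ext ?_
    have := hσ i
    simp only [zero_add] at hd
    rw [hd] at this hl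
    simp only [Iso.refl, RelIso.refl_apply]
    omega
  · right
    refine RelIso.ext fun i => Fin.ext ?_
    have := hσ i
    simp only [zero_add] at hd
    rw [show v 1 - v 0 = -1 by omega] at this hl
    simp only [pathGraph.reverse, RelIso.coe_fn_mk, Fin.revPerm_apply, Fin.val_rev]
    omega

theorem _root_.SimpleGraph.pathGraph.natCard_iso {n : ℕ} (hn : 2 ≤ n) :
    Nat.card (pathGraph n ≃g pathGraph n) = 2 := by
  refine Nat.card_eq_two_iff.2 ⟨Iso.refl, pathGraph.reverse n, fun h => ?_, ?_⟩
  · have := congrArg (fun σ => ((σ ⟨0, by omega⟩ : Fin n) : ℕ)) h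
    simp [pathGraph.reverse] at this
    omega
  · ext σ
    simpa using pathGraph.iso_eq_refl_or_reverse σ

section Walks

variable {β : Type*} {G : SimpleGraph β}

theorem _root_.SimpleGraph.IsAcyclic.nodup_of_adj_of_ne (hG : G.IsAcyclic) {a b c d e : β}
    (hab : G.Adj a b) (hbc : G.Adj b c) (hcd : G.Adj c d) (hde : G.Adj d e)
    (hac : a ≠ c) (hbd : b ≠ d) (hce : c ≠ e) : [a, b, c, d, e].Nodup := by
  let p : G.Walk a e := .cons hab (.cons hbc (.cons hcd (.cons hde .nil)))
  have hp : p.IsPath := (hG.isPath_iff_isChain p).2 <| by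
    simp [p, hac, hbd, hce, hab.ne, hbc.ne, hcd.ne]
  exact hp.support_nodup

def _root_.SimpleGraph.Copy.pathGraphEquiv (n : ℕ) :
    Copy (pathGraph n) G ≃ {f : Fin n → β //
      (∀ i j : Fin n, i.val + 1 = j.val → G.Adj (f i) (f j)) ∧ Function.Injective f} where
  toFun f := ⟨f, fun _ _ h => f.toHom.map_adj (pathGraph_adj.2 (Or.inl h)), f.injective⟩
  invFun f := ⟨⟨f.1, fun h => (pathGraph_adj.1 h).elim (f.2.1 _ _) fun h => (f.2.1 _ _ h).symm⟩,
    f.2.2⟩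
  left_inv _ := rfl
  right_inv _ := rfl

/-- `(s, t, x, u, w)` records the non-backtracking walk `w u s t x` from its middle edge `st`. -/
def IsCentredWalk (G : SimpleGraph β) : β × β × β × β × β → Prop
  | (s, t, x, u, w) => G.Adj s t ∧ (G.Adj t x ∧ x ≠ s) ∧ (G.Adj s u ∧ u ≠ t) ∧ (G.Adj u w ∧ w ≠ s)

instance [DecidableEq β] [DecidableRel G.Adj] : DecidablePred (IsCentredWalk G) :=
  fun (_, _, _, _, _) => inferInstanceAs (Decidable (_ ∧ _))

def _root_.SimpleGraph.IsAcyclic.equivIsCentredWalk (hG : G.IsAcyclic) :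
    {f : Fin 5 → β // (∀ i j : Fin 5, i.val + 1 = j.val → G.Adj (f i) (f j)) ∧
      Function.Injective f} ≃ {q // IsCentredWalk G q} where
  toFun f := ⟨(f.1 2, f.1 3, f.1 4, f.1 1, f.1 0),
    ⟨f.2.1 2 3 rfl, ⟨f.2.1 3 4 rfl, f.2.2.ne (by decide)⟩, ⟨(f.2.1 1 2 rfl).symm,
      f.2.2.ne (by decide)⟩, ⟨(f.2.1 0 1 rfl).symm, f.2.2.ne (by decide)⟩⟩⟩
  invFun q := ⟨![q.1.2.2.2.2, q.1.2.2.2.1, q.1.1, q.1.2.1, q.1.2.2.1], by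
    obtain ⟨⟨s, t, x, u, w⟩, hst, ⟨htx, hxs⟩, ⟨hsu, hut⟩, ⟨huw, hws⟩⟩ := q
    refine ⟨fun i j hij => ?_, List.nodup_ofFn.1 <|
      hG.nodup_of_adj_of_ne huw.symm hsu.symm hst htx hws hut hxs.symm⟩
    fin_cases i <;> fin_cases j <;> simp at hij ⊢ <;> first | assumption | exact G.adj_symm ‹_›⟩
  left_inv f := Subtype.ext <| funext fun i => by fin_cases i <;> rfl
  right_inv _ := rfl

end Walks

theorem sum_ite_adj_swap {β M : Type*} [Fintype β] [AddCommMonoid M] (G : SimpleGraph β)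
    [DecidableRel G.Adj] (f : β → β → M) :
    ∑ s, ∑ t, (if G.Adj s t then f t s else 0) = ∑ s, ∑ t, if G.Adj s t then f s t else 0 := by
  rw [Finset.sum_comm]
  simp only [G.adj_comm]

section Counting

variable (G : SimpleGraph V) [DecidableRel G.Adj]

theorem filter_adj_ne_eq_erase (v u : V) :
    ({x | G.Adj v x ∧ x ≠ u} : Finset V) = (G.neighborFinset v).erase u := by
  ext; simp [and_comm]

variable {G}

theorem sum_boole_adj_ne {v u : V} (h : G.Adj v u) :
    ∑ x, (if G.Adj v x ∧ x ≠ u then (1 : ℚ) else 0) = deg G v - 1 := by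
  rw [Finset.sum_boole, filter_adj_ne_eq_erase, cast_card_erase_of_mem (by simpa using h), deg,
    card_neighborFinset_eq_degree]

theorem sum_deg_sub_one_of_adj_ne {s t : V} (h : G.Adj s t) :
    ∑ u, (if G.Adj s u ∧ u ≠ t then deg G u - 1 else 0) = xi G s - deg G t - deg G s + 1 := by
  have ht : t ∈ G.neighborFinset s := by simpa using h
  rw [← Finset.sum_filter, filter_adj_ne_eq_erase, Finset.sum_sub_distrib,
    Finset.sum_erase_eq_sub ht, sum_const, nsmul_one, cast_card_erase_of_mem ht, ← xi, deg, deg,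
    card_neighborFinset_eq_degree]
  ring

theorem sum_isCentredWalk_of_adj {s t : V} (h : G.Adj s t) :
    ∑ x, ∑ u, ∑ w, (if (G.Adj t x ∧ x ≠ s) ∧ (G.Adj s u ∧ u ≠ t) ∧ (G.Adj u w ∧ w ≠ s)
      then (1 : ℚ) else 0) = (deg G t - 1) * (xi G s - deg G t - deg G s + 1) := by
  have boole_and (P Q : Prop) [Decidable P] [Decidable Q] :
      (if P ∧ Q then (1 : ℚ) else 0) = (if P then 1 else 0) * if Q then 1 else 0 := by
    rw [ite_zero_mul_ite_zero, mul_one]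
  simp only [boole_and, ← Finset.mul_sum, ← Finset.sum_mul]
  simp only [ite_zero_mul_ite_zero, mul_one, sum_boole_adj_ne h.symm]
  rw [← sum_deg_sub_one_of_adj_ne h]
  congr 1
  refine Finset.sum_congr rfl fun u _ => ?_
  split_ifs with hu
  · rw [one_mul, sum_boole_adj_ne hu.1.symm]
  · rw [zero_mul]

theorem natCard_isCentredWalk :
    (Nat.card {q // IsCentredWalk G q} : ℚ) =
      ∑ s, ∑ t, if G.Adj s t then (deg G t - 1) * (xi G s - deg G t - deg G s + 1) else 0 := by
  rw [Nat.card_eq_fintype_card, Fintype.card_subtype, ← Finset.sum_boole]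
  simp only [Fintype.sum_prod_type, IsCentredWalk]
  refine Finset.sum_congr rfl fun s _ => Finset.sum_congr rfl fun t _ => ?_
  split_ifs with h
  · simpa only [h, true_and] using sum_isCentredWalk_of_adj h
  · simp [h]

end Counting

theorem stmt19 (G : SimpleGraph V) [DecidableRel G.Adj] (hT : G.IsTree) :
    (copyCount G (pathGraph 5) : ℚ) =
      (1 / 2) * edgeSum G (fun s t =>
        (deg G t - 1) * (xi G s - deg G t - deg G s + 1)
          + (deg G s - 1) * (xi G t - deg G s - deg G t + 1)) := by
  have hwalks : (Nat.card {q // IsCentredWalk G q} : ℚ) = copyCount G (pathGraph 5) * 2 := by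
    rw [← Nat.card_congr ((Copy.pathGraphEquiv 5).trans hT.isAcyclic.equivIsCentredWalk),
      Copy.natCard_eq_mul_natCard_iso, pathGraph.natCard_iso (by norm_num), copyCount, Nat.cast_mul,
      Nat.cast_ofNat]
  simp only [edgeSum, ite_add_zero, Finset.sum_add_distrib]
  rw [sum_ite_adj_swap G (fun s t => (deg G t - 1) * (xi G s - deg G t - deg G s + 1)),
    ← natCard_isCentredWalk, hwalks]
  ring

end CrossVar
end
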